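/- arXiv:2003.09067 — 12 statements merged into one kernel-verified Lean document; each statement's English description precedes it below -/
import Mathlib

section
/- For all real numbers a and b, (ν(a) − ν(b))² ≤ L_β · L_ζ · (ζ(a) − ζ(b)) · (β(a) − β(b)), where ν(s) = ∫₀ˢ ζ'(q) β'(q) dq. -/
/-!
On `[b, a]` the integrand satisfies `0 ≤ ζ' β' ≤ Lζ β'` and `ζ' β' ≤ Lβ ζ'`. Lipschitz functions
are absolutely continuous, so `∫ β' = β a - β b` and `∫ ζ' = ζ a - ζ b`; hence `ν a - ν b` is a
nonnegative number bounded by both `Lζ (β a - β b)` and `Lβ (ζ a - ζ b)`, and its square by their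
product.
-/

open MeasureTheory intervalIntegral

open scoped NNReal

variable {f g : ℝ → ℝ} {Kf Kg : ℝ≥0} {a b : ℝ}

lemma LipschitzWith.deriv_le (hf : LipschitzWith Kf f) (x : ℝ) : deriv f x ≤ Kf :=
  (le_abs_self _).trans (norm_deriv_le_of_lipschitz hf)

lemma LipschitzWith.intervalIntegrable_deriv_mul (hf : LipschitzWith Kf f)
    (hg : IntervalIntegrable g volume a b) :
    IntervalIntegrable (fun x ↦ deriv f x * g x) volume a b := by
  rw [intervalIntegrable_iff] at hg ⊢
  exact hg.bdd_mul (measurable_deriv f).aestronglyMeasurable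
    (ae_of_all _ fun _ ↦ norm_deriv_le_of_lipschitz hf)

lemma integral_deriv_mul_deriv_le (hfK : LipschitzWith Kf f) (hg : Monotone g)
    (hg_ac : AbsolutelyContinuousOnInterval g a b) (hab : a ≤ b) :
    ∫ x in a..b, deriv f x * deriv g x ≤ Kf * (g b - g a) :=
  calc ∫ x in a..b, deriv f x * deriv g x
      ≤ ∫ x in a..b, Kf * deriv g x :=
        integral_mono_on hab (hfK.intervalIntegrable_deriv_mul hg_ac.intervalIntegrable_deriv)
          (hg_ac.intervalIntegrable_deriv.const_mul _)
          fun x _ ↦ mul_le_mul_of_nonneg_right (hfK.deriv_le x) hg.deriv_nonneg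
    _ = Kf * (g b - g a) := by rw [intervalIntegral.integral_const_mul, hg_ac.integral_deriv_eq_sub]

lemma sq_integral_deriv_mul_deriv_le (hf : Monotone f) (hfK : LipschitzWith Kf f)
    (hg : Monotone g) (hgK : LipschitzWith Kg g) (a b : ℝ) :
    (∫ x in a..b, deriv f x * deriv g x) ^ 2 ≤ Kf * Kg * (f b - f a) * (g b - g a) := by
  wlog hab : a ≤ b generalizing a b
  · have := this b a (le_of_not_ge hab)
    rw [integral_symm, neg_sq]
    linarith
  have hf_ac : AbsolutelyContinuousOnInterval f a b :=
    hfK.lipschitzOnWith.absolutelyContinuousOnInterval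
  have hg_ac : AbsolutelyContinuousOnInterval g a b :=
    hgK.lipschitzOnWith.absolutelyContinuousOnInterval
  have h_nonneg : 0 ≤ ∫ x in a..b, deriv f x * deriv g x :=
    integral_nonneg hab fun _ _ ↦ mul_nonneg hf.deriv_nonneg hg.deriv_nonneg
  have h_le_g := integral_deriv_mul_deriv_le hfK hg hg_ac hab
  have h_le_f : ∫ x in a..b, deriv f x * deriv g x ≤ Kg * (f b - f a) := by
    simpa only [mul_comm (deriv f _)] using integral_deriv_mul_deriv_le hgK hf hf_ac hab
  calc (∫ x in a..b, deriv f x * deriv g x) ^ 2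
      ≤ (Kg * (f b - f a)) * (Kf * (g b - g a)) := by
        rw [sq]; exact mul_le_mul h_le_f h_le_g h_nonneg (h_nonneg.trans h_le_f)
    _ = Kf * Kg * (f b - f a) * (g b - g a) := by ring

theorem stmt1_general (β ζ : ℝ → ℝ) (Lβ Lζ : ℝ) (hLβ : 0 < Lβ) (hLζ : 0 < Lζ)
    (hβmono : Monotone β) (hζmono : Monotone ζ)
    (hβlip : LipschitzWith Lβ.toNNReal β) (hζlip : LipschitzWith Lζ.toNNReal ζ)
    (ν : ℝ → ℝ) (hν : ∀ s : ℝ, ν s = ∫ q in (0:ℝ)..s, deriv ζ q * deriv β q)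
    (a b : ℝ) :
    (ν a - ν b) ^ 2 ≤ Lβ * Lζ * (ζ a - ζ b) * (β a - β b) := by
  have h_int : ∀ s, IntervalIntegrable (fun q ↦ deriv ζ q * deriv β q) volume 0 s := fun s ↦
    hζlip.intervalIntegrable_deriv_mul
      hβlip.lipschitzOnWith.absolutelyContinuousOnInterval.intervalIntegrable_deriv
  have h_diff : ν a - ν b = ∫ q in b..a, deriv ζ q * deriv β q := by
    rw [hν, hν, integral_interval_sub_left (h_int a) (h_int b)]
  rw [h_diff, mul_comm Lβ, ← Real.coe_toNNReal _ hLβ.le, ← Real.coe_toNNReal _ hLζ.le]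
  exact sq_integral_deriv_mul_deriv_le hζmono hζlip hβmono hβlip b a

/-- For all real numbers `a` and `b`,
`(ν a - ν b)² ≤ Lβ * Lζ * (ζ a - ζ b) * (β a - β b)`, where
`ν s = ∫ q in 0..s, ζ' q * β' q` (derivatives taken to be `0` at points of
non-differentiability, as in Mathlib's `deriv`). -/
theorem stmt1 (β ζ : ℝ → ℝ) (Lβ Lζ : ℝ) (hLβ : 0 < Lβ) (hLζ : 0 < Lζ)
    (hβmono : Monotone β) (hζmono : Monotone ζ)
    (hβlip : LipschitzWith Lβ.toNNReal β) (hζlip : LipschitzWith Lζ.toNNReal ζ)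
    (hβ0 : β 0 = 0) (hζ0 : ζ 0 = 0)
    (ν : ℝ → ℝ) (hν : ∀ s : ℝ, ν s = ∫ q in (0:ℝ)..s, deriv ζ q * deriv β q)
    (a b : ℝ) :
    (ν a - ν b) ^ 2 ≤ Lβ * Lζ * (ζ a - ζ b) * (β a - β b) :=
  stmt1_general β ζ Lβ Lζ hLβ hLζ hβmono hζmono hβlip hζlip ν hν a b
end

section
/- For every real number s, B(β(s)) = ∫₀ˢ ζ(q) β'(q) dq, where B(z) = ∫₀ᶻ ζ(β_r(q)) dq. In particular, the composition B ∘ β : ℝ → [0, ∞) is continuous. -/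
/-!
Let `ν` be the Stieltjes measure of `β`. As `β` is Lipschitz, it is absolutely continuous, so the
fundamental theorem of calculus gives `ν = β' dx`. The pseudo-inverse `β_r` is a right inverse of
the monotone `β` on its range, hence monotone, and it pushes Lebesgue measure on `(β a, β b]`
forward to `ν` on `(a, b]`: the preimage of `(c, d]` differs from `(β c, β d]` at most in the
endpoints. Hence `∫_{β a}^{β b} ζ ∘ β_r = ∫_a^b ζ dν = ∫_a^b ζ β'`, and continuity and
nonnegativity are read off the right-hand side.
-/

open MeasureTheory intervalIntegral Set

theorem Monotone.aemeasurable_restrict_of_rightInvOn {f g : ℝ → ℝ} (hf : Monotone f) {t : Set ℝ}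
    (ht : MeasurableSet t) (hg : RightInvOn g f t) : AEMeasurable g (volume.restrict t) :=
  aemeasurable_restrict_of_monotoneOn ht
    (Function.monotoneOn_of_rightInvOn_of_mapsTo (hf.monotoneOn univ) hg (mapsTo_univ _ _))

theorem Monotone.preimage_Ioc_inter_ae_eq_of_rightInvOn {f g : ℝ → ℝ} (hf : Monotone f)
    {t : Set ℝ} (hg : RightInvOn g f t) (c d : ℝ) :
    (g ⁻¹' Ioc c d ∩ t : Set ℝ) =ᵐ[volume] (Ioc (f c) (f d) ∩ t : Set ℝ) := by
  rw [ae_eq_set]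
  constructor
  · refine measure_mono_null (fun z ⟨⟨⟨hc, hd⟩, hz⟩, hz'⟩ => ?_) (measure_singleton (f c))
    have hcz : f c ≤ z := hg hz ▸ hf hc.le
    have hzd : z ≤ f d := hg hz ▸ hf hd
    exact le_antisymm (not_lt.1 fun h => hz' ⟨⟨h, hzd⟩, hz⟩) hcz
  · refine measure_mono_null (fun z ⟨⟨⟨hc, hd⟩, hz⟩, hz'⟩ => ?_) (measure_singleton (f d))
    have hcz : c < g z := lt_of_not_ge fun h => hc.not_ge (hg hz ▸ hf h)
    have hzd : d < g z := lt_of_not_ge fun h => hz' ⟨⟨hcz, h⟩, hz⟩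
    exact le_antisymm hd (hg hz ▸ hf hzd.le)

namespace StieltjesFunction

variable (S : StieltjesFunction ℝ)

theorem measure_eq_withDensity_deriv (hS : ∀ a b, AbsolutelyContinuousOnInterval S a b) :
    S.measure = volume.withDensity fun x => ENNReal.ofReal (deriv S x) := by
  refine Measure.ext_of_Ioc _ _ fun a b hab => ?_
  have hint : IntegrableOn (deriv S) (Ioc a b) :=
    (intervalIntegrable_iff_integrableOn_Ioc_of_le hab.le).1 (hS a b).intervalIntegrable_deriv
  rw [S.measure_Ioc, withDensity_apply _ measurableSet_Ioc,
    ← ofReal_integral_eq_lintegral_ofReal hint (ae_of_all _ fun _ => S.mono.deriv_nonneg),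
    ← integral_of_le hab.le, (hS a b).integral_deriv_eq_sub]

theorem setIntegral_measure_eq_setIntegral_mul_deriv
    (hS : ∀ a b, AbsolutelyContinuousOnInterval S a b) (φ : ℝ → ℝ) {s : Set ℝ}
    (hs : MeasurableSet s) :
    ∫ x in s, φ x ∂S.measure = ∫ x in s, φ x * deriv S x := by
  rw [S.measure_eq_withDensity_deriv hS]
  refine (setIntegral_withDensity_eq_setIntegral_smul (measurable_deriv S).real_toNNReal φ hs).trans
    (setIntegral_congr_fun hs fun x _ => ?_)
  simp [NNReal.smul_def, Real.coe_toNNReal _ S.mono.deriv_nonneg, mul_comm]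

variable {S} {g : ℝ → ℝ} {a b : ℝ}

theorem map_restrict_Ioc_of_rightInvOn (hg : RightInvOn g S (Ioc (S a) (S b))) :
    (volume.restrict (Ioc (S a) (S b))).map g = S.measure.restrict (Ioc a b) := by
  have hgm := S.mono.aemeasurable_restrict_of_rightInvOn measurableSet_Ioc hg
  refine Measure.ext_of_Ioc_finite _ _ ?_ fun c d _ => ?_
  · rw [Measure.map_apply_of_aemeasurable hgm MeasurableSet.univ, preimage_univ,
      Measure.restrict_apply_univ, Measure.restrict_apply_univ, S.measure_Ioc, Real.volume_Ioc]
  · rw [Measure.map_apply_of_aemeasurable hgm measurableSet_Ioc,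
      Measure.restrict_apply' measurableSet_Ioc, Measure.restrict_apply' measurableSet_Ioc,
      measure_congr (S.mono.preimage_Ioc_inter_ae_eq_of_rightInvOn hg c d), Ioc_inter_Ioc,
      Real.volume_Ioc, Ioc_inter_Ioc, S.measure_Ioc, S.mono.map_max, S.mono.map_min]

theorem setIntegral_Ioc_comp_of_rightInvOn (hg : RightInvOn g S (Ioc (S a) (S b))) {φ : ℝ → ℝ}
    (hφ : Measurable φ) :
    ∫ z in Ioc (S a) (S b), φ (g z) = ∫ x in Ioc a b, φ x ∂S.measure := by
  rw [← map_restrict_Ioc_of_rightInvOn hg,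
    integral_map (S.mono.aemeasurable_restrict_of_rightInvOn measurableSet_Ioc hg)
      hφ.aestronglyMeasurable]

theorem integral_comp_of_rightInvOn (hS : ∀ a b, AbsolutelyContinuousOnInterval S a b)
    (hg : RightInvOn g S (uIoc (S a) (S b))) {φ : ℝ → ℝ} (hφ : Measurable φ) :
    ∫ z in S a..S b, φ (g z) = ∫ x in a..b, φ x * deriv S x := by
  rcases le_total a b with hab | hab
  · rw [uIoc_of_le (S.mono hab)] at hg
    rw [integral_of_le (S.mono hab), integral_of_le hab, setIntegral_Ioc_comp_of_rightInvOn hg hφ,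
      S.setIntegral_measure_eq_setIntegral_mul_deriv hS φ measurableSet_Ioc]
  · rw [uIoc_of_ge (S.mono hab)] at hg
    rw [integral_of_ge (S.mono hab), integral_of_ge hab, setIntegral_Ioc_comp_of_rightInvOn hg hφ,
      S.setIntegral_measure_eq_setIntegral_mul_deriv hS φ measurableSet_Ioc]

end StieltjesFunction

theorem Monotone.rightInvOn_range_of_pseudoInverse {β βr : ℝ → ℝ} (hβmono : Monotone β)
    (hβcont : Continuous β) (hβ0 : β 0 = 0)
    (hβr_pos : ∀ z ∈ range β, 0 < z → βr z = sInf {t : ℝ | β t = z})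
    (hβr_zero : βr 0 = 0)
    (hβr_neg : ∀ z ∈ range β, z < 0 → βr z = sSup {t : ℝ | β t = z}) :
    RightInvOn βr β (range β) := by
  rintro _ ⟨u, rfl⟩
  have hclosed : IsClosed {t | β t = β u} := isClosed_eq hβcont continuous_const
  rcases lt_trichotomy (β u) 0 with h | h | h
  · rw [hβr_neg _ ⟨u, rfl⟩ h]
    refine hclosed.csSup_mem ⟨u, rfl⟩ ⟨0, fun t (ht : β t = β u) => ?_⟩
    by_contra! h0t
    have := hβmono h0t.le
    linarith
  · rw [h, hβr_zero, hβ0]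
  · rw [hβr_pos _ ⟨u, rfl⟩ h]
    refine hclosed.csInf_mem ⟨u, rfl⟩ ⟨0, fun t (ht : β t = β u) => ?_⟩
    by_contra! ht0
    have := hβmono ht0.le
    linarith

theorem Monotone.integral_mul_deriv_nonneg {φ β : ℝ → ℝ} (hφ : Monotone φ) (hφ0 : φ 0 = 0)
    (hβ : Monotone β) (s : ℝ) : 0 ≤ ∫ q in 0..s, φ q * deriv β q := by
  rcases le_total 0 s with hs | hs
  · exact integral_nonneg hs fun q hq => mul_nonneg (hφ0 ▸ hφ hq.1) hβ.deriv_nonneg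
  · rw [integral_symm, ← intervalIntegral.integral_neg]
    exact integral_nonneg hs fun q hq =>
      neg_nonneg.2 (mul_nonpos_of_nonpos_of_nonneg (hφ0 ▸ hφ hq.2) hβ.deriv_nonneg)

theorem stmt3_general (β ζ : ℝ → ℝ) (Lβ Lζ : ℝ)
    (hβmono : Monotone β) (hζmono : Monotone ζ)
    (hβlip : LipschitzWith Lβ.toNNReal β) (hζlip : LipschitzWith Lζ.toNNReal ζ)
    (hβ0 : β 0 = 0) (hζ0 : ζ 0 = 0)
    (βr : ℝ → ℝ)
    (hβr_pos : ∀ z ∈ Set.range β, 0 < z → βr z = sInf {t : ℝ | β t = z})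
    (hβr_zero : βr 0 = 0)
    (hβr_neg : ∀ z ∈ Set.range β, z < 0 → βr z = sSup {t : ℝ | β t = z})
    (B : ℝ → ℝ) (hB : ∀ z ∈ Set.range β, B z = ∫ q in (0:ℝ)..z, ζ (βr q)) :
    (∀ s : ℝ, B (β s) = ∫ q in (0:ℝ)..s, ζ q * deriv β q) ∧
      Continuous (fun s : ℝ => B (β s)) ∧ (∀ s : ℝ, 0 ≤ B (β s)) := by
  have hβcont := hβlip.continuous
  let S : StieltjesFunction ℝ := ⟨β, hβmono, fun _ => hβcont.continuousWithinAt⟩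
  have hSac (a b : ℝ) : AbsolutelyContinuousOnInterval S a b :=
    hβlip.lipschitzOnWith.absolutelyContinuousOnInterval
  have hβr : RightInvOn βr β (range β) :=
    hβmono.rightInvOn_range_of_pseudoInverse hβcont hβ0 hβr_pos hβr_zero hβr_neg
  have hB_eq (s : ℝ) : B (β s) = ∫ q in (0:ℝ)..s, ζ q * deriv β q := by
    have hrange : uIoc (S 0) (S s) ⊆ range β := uIoc_subset_uIcc.trans
      ((intermediate_value_uIcc hβcont.continuousOn).trans (image_subset_range _ _))
    rw [hB _ ⟨s, rfl⟩, ← S.integral_comp_of_rightInvOn hSac (hβr.mono hrange) hζmono.measurable]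
    simp [S, hβ0]
  have hint (a b : ℝ) : IntervalIntegrable (fun q => ζ q * deriv β q) volume a b := by
    simpa only [mul_comm] using
      (hSac a b).intervalIntegrable_deriv.continuousOn_mul hζlip.continuous.continuousOn
  refine ⟨hB_eq, ?_, fun s => (hB_eq s).symm ▸ hζmono.integral_mul_deriv_nonneg hζ0 hβmono s⟩
  simpa only [hB_eq] using continuous_primitive hint 0

/-- For every real `s`, `B (β s) = ∫ q in 0..s, ζ q * β' q`, where
`B z = ∫ q in 0..z, ζ (βr q)` and `βr` is the pseudo-inverse of `β`.
In particular the composition `B ∘ β : ℝ → [0,∞)` is continuous (and nonnegative). -/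
theorem stmt3 (β ζ : ℝ → ℝ) (Lβ Lζ : ℝ) (hLβ : 0 < Lβ) (hLζ : 0 < Lζ)
    (hβmono : Monotone β) (hζmono : Monotone ζ)
    (hβlip : LipschitzWith Lβ.toNNReal β) (hζlip : LipschitzWith Lζ.toNNReal ζ)
    (hβ0 : β 0 = 0) (hζ0 : ζ 0 = 0)
    (βr : ℝ → ℝ)
    (hβr_pos : ∀ z ∈ Set.range β, 0 < z → βr z = sInf {t : ℝ | β t = z})
    (hβr_zero : βr 0 = 0)
    (hβr_neg : ∀ z ∈ Set.range β, z < 0 → βr z = sSup {t : ℝ | β t = z})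
    (B : ℝ → ℝ) (hB : ∀ z ∈ Set.range β, B z = ∫ q in (0:ℝ)..z, ζ (βr q)) :
    (∀ s : ℝ, B (β s) = ∫ q in (0:ℝ)..s, ζ q * deriv β q) ∧
      Continuous (fun s : ℝ => B (β s)) ∧ (∀ s : ℝ, 0 ≤ B (β s)) :=
  stmt3_general β ζ Lβ Lζ hβmono hζmono hβlip hζlip hβ0 hζ0 βr hβr_pos hβr_zero hβr_neg B hB
end

section
/- There exist constants K₀, K₁, K₂ > 0 such that for every real number s, K₀ · β(s)² − K₁ ≤ 𝔅(s) ≤ K₂ · s², where 𝔅(s) = ∫₀ˢ ζ(q) β'(q) dq. (One may take K₂ = L_ζ L_β / 2, K₀ = M₀/(4 L_β), and K₁ = (M₀/(4 L_β)) · max_{[−S,S]} β², where S > 0 is chosen so that |ζ(q)| ≥ (M₀/2)|q| for |q| ≥ S.) -/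
open MeasureTheory intervalIntegral

/-!
With `c = M₀ / L_β`, the growth bound on `ζ` together with `|β q| ≤ L_β |q|` gives
`ζ ≥ c β - M₁` on `(0, ∞)` and `ζ ≤ c β + M₁` on `(-∞, 0)`. Multiplying by `β' ≥ 0` and
integrating from `0` to `s` (the fundamental theorem of calculus holds for the absolutely
continuous `β`, so `∫ β β' = β² / 2`) yields `𝔅 s ≥ c/2 β(s)² - M₁ |β s|`, and AM-GM turns this
into `c/4 β(s)² - M₁² / c`. The upper bound comes from `|ζ q β' q| ≤ L_ζ L_β |q|`.
-/

open Set
open scoped NNReal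

theorem intervalIntegral.integral_mono_on_Ioo_oriented {f g : ℝ → ℝ} {a b : ℝ}
    (hf : IntervalIntegrable f volume a b) (hg : IntervalIntegrable g volume a b)
    (h_le : ∀ x ∈ Ioo a b, f x ≤ g x) (h_ge : ∀ x ∈ Ioo b a, g x ≤ f x) :
    ∫ x in a..b, f x ≤ ∫ x in a..b, g x := by
  rcases le_total a b with hab | hba
  · exact integral_mono_on_of_le_Ioo hab hf hg h_le
  · rw [integral_symm b a, integral_symm b a, neg_le_neg_iff]
    exact integral_mono_on_of_le_Ioo hba hg.symm hf.symm h_ge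

theorem intervalIntegral.integral_le_of_abs_le_mul_abs {g : ℝ → ℝ} {C s : ℝ}
    (hg : IntervalIntegrable g volume 0 s) (h : ∀ q, |g q| ≤ C * |q|) :
    ∫ q in 0..s, g q ≤ C / 2 * s ^ 2 := by
  have hlin : ∫ q in 0..s, C * q = C / 2 * s ^ 2 := by
    rw [integral_const_mul, integral_id]
    ring
  rw [← hlin]
  refine integral_mono_on_Ioo_oriented hg
    ((by fun_prop : Continuous fun q : ℝ => C * q).intervalIntegrable 0 s)
    (fun q hq => ?_) (fun q hq => ?_)
  · have := (abs_le.mp (h q)).2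
    rwa [abs_of_pos hq.1] at this
  · have := (abs_le.mp (h q)).1
    rwa [abs_of_neg hq.2, mul_neg, neg_neg] at this

namespace AbsolutelyContinuousOnInterval

variable {f : ℝ → ℝ} {a b : ℝ}

theorem integral_mul_deriv_self (hf : AbsolutelyContinuousOnInterval f a b) :
    ∫ x in a..b, f x * deriv f x = (f b ^ 2 - f a ^ 2) / 2 := by
  have h := hf.integral_mul_deriv_eq_deriv_mul hf
  simp_rw [mul_comm (deriv f _)] at h
  linarith

theorem integral_affine_mul_deriv (hf : AbsolutelyContinuousOnInterval f a b) (c d : ℝ) :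
    ∫ x in a..b, (c * f x + d) * deriv f x = c / 2 * (f b ^ 2 - f a ^ 2) + d * (f b - f a) := by
  have hf' := hf.intervalIntegrable_deriv
  simp_rw [add_mul, mul_assoc]
  rw [integral_add ((hf'.continuousOn_mul hf.continuousOn).const_mul c) (hf'.const_mul d),
    intervalIntegral.integral_const_mul, intervalIntegral.integral_const_mul,
    hf.integral_mul_deriv_self, hf.integral_deriv_eq_sub]
  ring

end AbsolutelyContinuousOnInterval

theorem le_integral_mul_deriv_of_monotone {β ζ : ℝ → ℝ} {c M s : ℝ} (hβ : Monotone β)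
    (hac : AbsolutelyContinuousOnInterval β 0 s) (hβ0 : β 0 = 0) (hζ : Continuous ζ)
    (hpos : ∀ q, 0 < q → c * β q - M ≤ ζ q) (hneg : ∀ q < 0, ζ q ≤ c * β q + M) :
    c / 2 * β s ^ 2 - M * |β s| ≤ ∫ q in 0..s, ζ q * deriv β q := by
  have hint : ∀ {g : ℝ → ℝ}, ContinuousOn g (uIcc 0 s) →
      IntervalIntegrable (fun q => g q * deriv β q) volume 0 s :=
    hac.intervalIntegrable_deriv.continuousOn_mul
  have hβc := hac.continuousOn
  have hβ' : ∀ q, 0 ≤ deriv β q := fun _ => hβ.deriv_nonneg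
  rcases le_total 0 s with hs | hs
  · have hcmp : ∫ q in 0..s, (c * β q + -M) * deriv β q ≤ ∫ q in 0..s, ζ q * deriv β q :=
      integral_mono_on_Ioo_oriented (hint (by fun_prop)) (hint hζ.continuousOn)
        (fun q hq => mul_le_mul_of_nonneg_right (hpos q hq.1) (hβ' q))
        (fun q hq => absurd (hq.1.trans hq.2) (not_lt.mpr hs))
    rw [hac.integral_affine_mul_deriv, hβ0] at hcmp
    rw [abs_of_nonneg (hβ0 ▸ hβ hs)]
    linarith
  · have hcmp : ∫ q in 0..s, (c * β q + M) * deriv β q ≤ ∫ q in 0..s, ζ q * deriv β q :=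
      integral_mono_on_Ioo_oriented (hint (by fun_prop)) (hint hζ.continuousOn)
        (fun q hq => absurd (hq.1.trans hq.2) (not_lt.mpr hs))
        (fun q hq => mul_le_mul_of_nonneg_right (hneg q hq.2) (hβ' q))
    rw [hac.integral_affine_mul_deriv, hβ0] at hcmp
    rw [abs_of_nonpos (hβ0 ▸ hβ hs)]
    linarith

theorem le_integral_mul_deriv_of_growth {β ζ : ℝ → ℝ} {L : ℝ≥0} {M₀ M₁ : ℝ} (hL : 0 < L)
    (hM₀ : 0 ≤ M₀) (hβ : Monotone β) (hβlip : LipschitzWith L β) (hβ0 : β 0 = 0)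
    (hζ : Monotone ζ) (hζc : Continuous ζ) (hζ0 : ζ 0 = 0)
    (hgrow : ∀ q, M₀ * |q| - M₁ ≤ |ζ q|) (s : ℝ) :
    M₀ / L / 2 * β s ^ 2 - M₁ * |β s| ≤ ∫ q in 0..s, ζ q * deriv β q := by
  set c : ℝ := M₀ / L
  have hcL : c * L = M₀ := div_mul_cancel₀ M₀ (NNReal.coe_pos.mpr hL).ne'
  have hc0 : 0 ≤ c := by positivity
  have hβ_le q : |β q| ≤ L * |q| := hβlip.norm_le_mul hβ0 q
  refine le_integral_mul_deriv_of_monotone hβ hβlip.lipschitzOnWith.absolutelyContinuousOnInterval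
    hβ0 hζc (fun q hq => ?_) (fun q hq => ?_)
  · have hζq := hgrow q
    rw [abs_of_pos hq, abs_of_nonneg (hζ0 ▸ hζ hq.le)] at hζq
    have hβq := (abs_le.mp (hβ_le q)).2
    rw [abs_of_pos hq] at hβq
    nlinarith
  · have hζq := hgrow q
    rw [abs_of_neg hq, abs_of_nonpos (hζ0 ▸ hζ hq.le)] at hζq
    have hβq := (abs_le.mp (hβ_le q)).1
    rw [abs_of_neg hq] at hβq
    nlinarith

theorem integral_mul_deriv_le_of_lipschitzWith {β ζ : ℝ → ℝ} {Lβ Lζ : ℝ≥0}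
    (hβ : LipschitzWith Lβ β) (hζ : LipschitzWith Lζ ζ) (hζ0 : ζ 0 = 0) (s : ℝ) :
    ∫ q in 0..s, ζ q * deriv β q ≤ Lζ * Lβ / 2 * s ^ 2 := by
  refine integral_le_of_abs_le_mul_abs ?_ fun q => ?_
  · exact hβ.lipschitzOnWith.absolutelyContinuousOnInterval.intervalIntegrable_deriv
      |>.continuousOn_mul hζ.continuous.continuousOn
  · rw [abs_mul, mul_right_comm]
    exact mul_le_mul (hζ.norm_le_mul hζ0 q) (norm_deriv_le_of_lipschitz hβ) (abs_nonneg _)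
      (by positivity)

/-- There exist constants `K₀, K₁, K₂ > 0` such that for every real `s`,
`K₀ * (β s)² - K₁ ≤ 𝔅 s ≤ K₂ * s²`, where `𝔅 s = ∫ q in 0..s, ζ q * β' q`. -/
theorem stmt4 (β ζ : ℝ → ℝ) (Lβ Lζ : ℝ) (hLβ : 0 < Lβ) (hLζ : 0 < Lζ)
    (hβmono : Monotone β) (hζmono : Monotone ζ)
    (hβlip : LipschitzWith Lβ.toNNReal β) (hζlip : LipschitzWith Lζ.toNNReal ζ)
    (hβ0 : β 0 = 0) (hζ0 : ζ 0 = 0)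
    (M₀ M₁ : ℝ) (hM₀ : 0 < M₀) (hM₁ : 0 < M₁)
    (hgrow : ∀ s : ℝ, M₀ * |s| - M₁ ≤ |ζ s|)
    (𝔅 : ℝ → ℝ) (h𝔅 : ∀ s : ℝ, 𝔅 s = ∫ q in (0:ℝ)..s, ζ q * deriv β q) :
    ∃ K₀ K₁ K₂ : ℝ, 0 < K₀ ∧ 0 < K₁ ∧ 0 < K₂ ∧
      ∀ s : ℝ, K₀ * (β s) ^ 2 - K₁ ≤ 𝔅 s ∧ 𝔅 s ≤ K₂ * s ^ 2 := by
  lift Lβ to ℝ≥0 using hLβ.le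
  lift Lζ to ℝ≥0 using hLζ.le
  rw [Real.toNNReal_coe] at hβlip hζlip
  set c : ℝ := M₀ / Lβ
  have hc0 : 0 < c := by positivity
  refine ⟨c / 4, M₁ ^ 2 / c, Lζ * Lβ / 2, by positivity, by positivity, by positivity,
    fun s => ⟨?_, ?_⟩⟩
  · calc c / 4 * β s ^ 2 - M₁ ^ 2 / c ≤ c / 2 * β s ^ 2 - M₁ * |β s| := by
          have := sq_nonneg (c / 2 * |β s| - M₁)
          field_simp
          nlinarith [sq_abs (β s)]
      _ ≤ 𝔅 s := h𝔅 s ▸ le_integral_mul_deriv_of_growth (NNReal.coe_pos.mp hLβ) hM₀.le hβmono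
          hβlip hβ0 hζmono hζlip.continuous hζ0 hgrow s
  · exact h𝔅 s ▸ integral_mul_deriv_le_of_lipschitzWith hβlip hζlip hζ0 s
end

section
/- For all real numbers a and b, ζ(a) · (β(b) − β(a)) ≤ 𝔅(b) − 𝔅(a), where 𝔅(s) = ∫₀ˢ ζ(q) β'(q) dq. (This expresses that ζ(a) belongs to the convex subdifferential of B at β(a), since 𝔅 = B ∘ β.) -/
/-!
Since β is Lipschitz, it is absolutely continuous, so
`ζ a * (β b - β a) = ∫ q in a..b, ζ a * β' q` and the claim becomes
`0 ≤ ∫ q in a..b, (ζ q - ζ a) * β' q`. As `β' ≥ 0` and ζ is monotone, the integrand has the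
sign of `q - a`, which matches the orientation of the interval.
-/

open MeasureTheory intervalIntegral Set

theorem Monotone.intervalIntegrable_mul {f g : ℝ → ℝ} {a b : ℝ} (hf : Monotone f)
    (hg : IntervalIntegrable g volume a b) :
    IntervalIntegrable (fun x => f x * g x) volume a b := by
  rw [intervalIntegrable_iff] at hg ⊢
  refine hg.bdd_mul (c := max |f (min a b)| |f (max a b)|) hf.measurable.aestronglyMeasurable
    (ae_restrict_of_forall_mem measurableSet_uIoc fun x hx => ?_)
  obtain ⟨hlo, hhi⟩ := uIoc_subset_uIcc hx
  exact abs_le_max_abs_abs (hf hlo) (hf hhi)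

theorem mul_sub_le_integral_mul_deriv {β ζ : ℝ → ℝ} {a b : ℝ} (hβ : Monotone β)
    (hβac : AbsolutelyContinuousOnInterval β a b) (hζ : Monotone ζ) :
    ζ a * (β b - β a) ≤ ∫ q in a..b, ζ q * deriv β q := by
  have hint : IntervalIntegrable (deriv β) volume a b := hβac.intervalIntegrable_deriv
  have hsplit : ∫ q in a..b, ζ q * deriv β q
      = ζ a * (β b - β a) + ∫ q in a..b, (ζ q - ζ a) * deriv β q := by
    have hζa : Monotone fun q => ζ q - ζ a := fun _ _ h => sub_le_sub_right (hζ h) _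
    rw [← hβac.integral_deriv_eq_sub, ← intervalIntegral.integral_const_mul,
      ← intervalIntegral.integral_add (hint.const_mul _) (hζa.intervalIntegrable_mul hint)]
    simp only [sub_mul, add_sub_cancel]
  rw [hsplit, le_add_iff_nonneg_right]
  rcases le_total a b with hab | hba
  · exact integral_nonneg hab fun q hq => mul_nonneg (sub_nonneg.2 (hζ hq.1)) hβ.deriv_nonneg
  · rw [integral_symm, ← intervalIntegral.integral_neg]
    refine integral_nonneg hba fun q hq => ?_
    rw [← neg_mul, neg_sub]
    exact mul_nonneg (sub_nonneg.2 (hζ hq.2)) hβ.deriv_nonneg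

theorem stmt5_general (β ζ : ℝ → ℝ) (Lβ : ℝ)
    (hβmono : Monotone β) (hζmono : Monotone ζ)
    (hβlip : LipschitzWith Lβ.toNNReal β)
    (𝔅 : ℝ → ℝ) (h𝔅 : ∀ s : ℝ, 𝔅 s = ∫ q in (0:ℝ)..s, ζ q * deriv β q)
    (a b : ℝ) :
    ζ a * (β b - β a) ≤ 𝔅 b - 𝔅 a := by
  have hint (c : ℝ) : IntervalIntegrable (fun q => ζ q * deriv β q) volume 0 c :=
    hζmono.intervalIntegrable_mul (hβmono.monotoneOn _).intervalIntegrable_deriv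
  rw [h𝔅, h𝔅, integral_interval_sub_left (hint b) (hint a)]
  exact mul_sub_le_integral_mul_deriv hβmono
    hβlip.lipschitzOnWith.absolutelyContinuousOnInterval hζmono

/-- For all real numbers `a` and `b`, `ζ a * (β b - β a) ≤ 𝔅 b - 𝔅 a`,
where `𝔅 s = ∫ q in 0..s, ζ q * β' q` (so that `ζ a` belongs to the convex
subdifferential of `B` at `β a`, since `𝔅 = B ∘ β`). -/
theorem stmt5 (β ζ : ℝ → ℝ) (Lβ Lζ : ℝ) (hLβ : 0 < Lβ) (hLζ : 0 < Lζ)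
    (hβmono : Monotone β) (hζmono : Monotone ζ)
    (hβlip : LipschitzWith Lβ.toNNReal β) (hζlip : LipschitzWith Lζ.toNNReal ζ)
    (hβ0 : β 0 = 0) (hζ0 : ζ 0 = 0)
    (𝔅 : ℝ → ℝ) (h𝔅 : ∀ s : ℝ, 𝔅 s = ∫ q in (0:ℝ)..s, ζ q * deriv β q)
    (a b : ℝ) :
    ζ a * (β b - β a) ≤ 𝔅 b - 𝔅 a :=
  stmt5_general β ζ Lβ hβmono hζmono hβlip 𝔅 h𝔅 a b
end

section
/- Let I be a closed interval of ℝ and H : ℝ → [0, ∞) be a convex continuous nonnegative function. Let Ω be an open bounded subset of ℝ^d (with Lebesgue measure), let v ∈ L²(Ω) and (v_m)_{m ∈ ℕ} ⊂ L²(Ω) all take values in I almost everywhere, and suppose v_m converges weakly to v in L²(Ω) (i.e. ∫_Ω v_m g dx → ∫_Ω v g dx for every g ∈ L²(Ω)). Then ∫_Ω H(v(x)) dx ≤ liminf_{m→∞} ∫_Ω H(v_m(x)) dx, where the integrals take values in [0, ∞]. -/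
open MeasureTheory Filter Topology

/-!
A convex `H : ℝ → ℝ` lies above its supporting lines `z ↦ H y + a y * (z - y)`, where the slope
`a y` is the right derivative, a monotone function of `y`. On the set where `|v| ≤ K` the slopes
`a ∘ v` therefore form a bounded test function, and integrating the supporting line at `v x`,
evaluated at `vm m x`, gives `∫_{|v| ≤ K} H(v) ≤ liminf ∫ H(vm)` in the weak limit. Letting
`K → ∞` (monotone convergence) finishes the proof.
-/

open Set
open scoped ENNReal

namespace ConvexOn

variable {H : ℝ → ℝ}

lemma add_rightDeriv_mul_sub_le (hH : ConvexOn ℝ univ H) (x y : ℝ) :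
    H x + derivWithin H (Ioi x) x * (y - x) ≤ H y := by
  have hx : x ∈ interior univ := by simp
  rcases lt_trichotomy x y with hxy | rfl | hyx
  · have h := hH.rightDeriv_le_slope_of_mem_interior hx (mem_univ y) hxy
    rw [slope_def_field, le_div_iff₀ (sub_pos.2 hxy)] at h
    linarith
  · simp
  · have h := (hH.slope_le_leftDeriv_of_mem_interior (mem_univ y) hx hyx).trans
      (hH.leftDeriv_le_rightDeriv_of_mem_interior hx)
    rw [slope_def_field, div_le_iff₀ (sub_pos.2 hyx)] at h
    linarith

lemma monotone_rightDeriv (hH : ConvexOn ℝ univ H) : Monotone fun x => derivWithin H (Ioi x) x :=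
  fun x y hxy => hH.monotoneOn_rightDeriv (by simp) (by simp) hxy

lemma continuous (hH : ConvexOn ℝ univ H) : Continuous H := by
  simpa [continuousOn_univ] using hH.continuousOn_interior

end ConvexOn

/-- `p` is the exponent of the test functions `g`, i.e. the dual exponent of the space of the
`u m`. -/
def WeakTendsto {α : Type*} [MeasurableSpace α] (μ : Measure α) (p : ℝ≥0∞) (u : ℕ → α → ℝ)
    (v : α → ℝ) : Prop :=
  ∀ g : α → ℝ, MemLp g p μ →
    Tendsto (fun m => ∫ x, u m x * g x ∂μ) atTop (𝓝 (∫ x, v x * g x ∂μ))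

namespace WeakTendsto

variable {α : Type*} [MeasurableSpace α] {μ : Measure α} {p q : ℝ≥0∞} {u : ℕ → α → ℝ}
  {v w : α → ℝ}

lemma mono_exponent [IsFiniteMeasure μ] (h : WeakTendsto μ p u v) (hpq : p ≤ q) :
    WeakTendsto μ q u v :=
  fun g hg => h g (hg.mono_exponent hpq)

lemma congr_right (h : WeakTendsto μ p u v) (hvw : v =ᵐ[μ] w) : WeakTendsto μ p u w := by
  intro g hg
  rw [integral_congr_ae (g := fun x => v x * g x) (hvw.symm.mono fun x hx => by rw [hx])]
  exact h g hg

lemma restrict (h : WeakTendsto μ p u v) {s : Set α} (hs : MeasurableSet s) :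
    WeakTendsto (μ.restrict s) p u v := by
  intro g hg
  have hind (f : α → ℝ) : ∫ x, f x * s.indicator g x ∂μ = ∫ x in s, f x * g x ∂μ := by
    simp_rw [← indicator_mul_right, integral_indicator hs]
  simpa only [hind] using h _ ((memLp_indicator_iff_restrict hs).2 hg)

end WeakTendsto

section

variable {α : Type*} [MeasurableSpace α] {μ : Measure α} {H : ℝ → ℝ} {v : α → ℝ}
  {u : ℕ → α → ℝ}

lemma ofReal_integral_le_lintegral_ofReal {f : α → ℝ} (hf : Integrable f μ) :
    ENNReal.ofReal (∫ x, f x ∂μ) ≤ ∫⁻ x, ENNReal.ofReal (f x) ∂μ := by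
  rw [integral_eq_lintegral_pos_part_sub_lintegral_neg_part hf]
  exact (ENNReal.ofReal_le_ofReal (sub_le_self _ ENNReal.toReal_nonneg)).trans
    ENNReal.ofReal_toReal_le

variable [IsFiniteMeasure μ]

theorem lintegral_ofReal_le_liminf_of_abs_le (hH : ConvexOn ℝ univ H) (hv : Integrable v μ)
    (hu : ∀ m, Integrable (u m) μ) (hweak : WeakTendsto μ ∞ u v) {K : ℝ}
    (hvK : ∀ᵐ x ∂μ, |v x| ≤ K) (hHv : ∀ᵐ x ∂μ, 0 ≤ H (v x)) :
    ∫⁻ x, ENNReal.ofReal (H (v x)) ∂μ ≤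
      liminf (fun m => ∫⁻ x, ENNReal.ofReal (H (u m x)) ∂μ) atTop := by
  set a : ℝ → ℝ := fun y => derivWithin H (Ioi y) y
  have hvK' : ∀ᵐ x ∂μ, v x ∈ Icc (-K) K := hvK.mono fun x hx => abs_le.1 hx
  obtain ⟨C, hC⟩ := (isCompact_Icc (a := -K) (b := K)).exists_bound_of_continuousOn
    hH.continuous.continuousOn
  have hHv_int : Integrable (fun x => H (v x)) μ :=
    .of_bound (hH.continuous.comp_aestronglyMeasurable hv.1) C
      (hvK'.mono fun x hx => hC _ hx)
  set g : α → ℝ := fun x => a (v x)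
  have hg_meas : AEStronglyMeasurable g μ :=
    (hH.monotone_rightDeriv.measurable.comp_aemeasurable hv.1.aemeasurable).aestronglyMeasurable
  have hg_bdd : ∀ᵐ x ∂μ, ‖g x‖ ≤ max |a (-K)| |a K| := hvK'.mono fun x hx =>
    abs_le_max_abs_abs (hH.monotone_rightDeriv hx.1) (hH.monotone_rightDeriv hx.2)
  -- the supporting line of `H` at `v x`, evaluated at `u m x`
  set φ : ℕ → α → ℝ := fun m x => H (v x) + (u m x * g x - v x * g x)
  have hug (m : ℕ) : Integrable (fun x => u m x * g x) μ := (hu m).mul_bdd hg_meas hg_bdd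
  have hvg : Integrable (fun x => v x * g x) μ := hv.mul_bdd hg_meas hg_bdd
  have hφ_int (m : ℕ) : Integrable (φ m) μ := hHv_int.add ((hug m).sub hvg)
  have hφ_le (m : ℕ) (x : α) : φ m x ≤ H (u m x) := by
    linear_combination hH.add_rightDeriv_mul_sub_le (v x) (u m x)
  have hφ_lim : Tendsto (fun m => ∫ x, φ m x ∂μ) atTop (𝓝 (∫ x, H (v x) ∂μ)) := by
    have hsplit (m : ℕ) : ∫ x, φ m x ∂μ =
        ∫ x, H (v x) ∂μ + (∫ x, u m x * g x ∂μ - ∫ x, v x * g x ∂μ) := by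
      rw [← integral_sub (hug m) hvg]
      exact integral_add hHv_int ((hug m).sub hvg)
    simp_rw [hsplit]
    simpa using tendsto_const_nhds.add
      ((hweak g (memLp_top_of_bound hg_meas _ hg_bdd)).sub_const (∫ x, v x * g x ∂μ))
  calc ∫⁻ x, ENNReal.ofReal (H (v x)) ∂μ = ENNReal.ofReal (∫ x, H (v x) ∂μ) :=
        (ofReal_integral_eq_lintegral_ofReal hHv_int hHv).symm
    _ = liminf (fun m => ENNReal.ofReal (∫ x, φ m x ∂μ)) atTop :=
        ((ENNReal.continuous_ofReal.tendsto _).comp hφ_lim).liminf_eq.symm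
    _ ≤ liminf (fun m => ∫⁻ x, ENNReal.ofReal (H (u m x)) ∂μ) atTop :=
        liminf_le_liminf (.of_forall fun m =>
          (ofReal_integral_le_lintegral_ofReal (hφ_int m)).trans
            (lintegral_mono fun x => ENNReal.ofReal_le_ofReal (hφ_le m x)))

theorem lintegral_ofReal_le_liminf_of_weakTendsto (hH : ConvexOn ℝ univ H) (hv : Integrable v μ)
    (hu : ∀ m, Integrable (u m) μ) (hweak : WeakTendsto μ ∞ u v) :
    ∫⁻ x, ENNReal.ofReal (H (v x)) ∂μ ≤
      liminf (fun m => ∫⁻ x, ENNReal.ofReal (H (u m x)) ∂μ) atTop := by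
  set w := hv.1.mk v
  have hvw : v =ᵐ[μ] w := hv.1.ae_eq_mk
  have hw : Measurable w := hv.1.stronglyMeasurable_mk.measurable
  set E : ℕ → Set α := fun K => {x | |w x| ≤ K ∧ 0 ≤ H (w x)}
  have hE (K : ℕ) : MeasurableSet (E K) :=
    (measurableSet_le hw.abs measurable_const).inter
      (measurableSet_le measurable_const (hH.continuous.measurable.comp hw))
  have hE_mono : Monotone E := fun K L hKL x hx =>
    ⟨hx.1.trans (Nat.cast_le.2 hKL), hx.2⟩
  have hE_supp : (fun x => ENNReal.ofReal (H (w x))).support ⊆ ⋃ K, E K := by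
    intro x hx
    obtain ⟨K, hK⟩ := exists_nat_ge |w x|
    exact mem_iUnion.2 ⟨K, hK, (ENNReal.ofReal_pos.1 (pos_iff_ne_zero.2 hx)).le⟩
  rw [lintegral_congr_ae (g := fun x => ENNReal.ofReal (H (w x)))
      (hvw.mono fun x hx => by rw [hx]),
    ← setLIntegral_eq_of_support_subset hE_supp,
    setLIntegral_iUnion_of_directed _ hE_mono.directed_le]
  refine iSup_le fun K => ?_
  have hbounds : ∀ᵐ x ∂μ.restrict (E K), |w x| ≤ K ∧ 0 ≤ H (w x) := ae_restrict_mem (hE K)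
  calc ∫⁻ x in E K, ENNReal.ofReal (H (w x)) ∂μ
      ≤ liminf (fun m => ∫⁻ x in E K, ENNReal.ofReal (H (u m x)) ∂μ) atTop :=
        lintegral_ofReal_le_liminf_of_abs_le hH (hv.congr hvw).restrict (fun m => (hu m).restrict)
          ((hweak.congr_right hvw).restrict (hE K)) (hbounds.mono fun _ hx => hx.1)
          (hbounds.mono fun _ hx => hx.2)
    _ ≤ liminf (fun m => ∫⁻ x, ENNReal.ofReal (H (u m x)) ∂μ) atTop :=
        liminf_le_liminf (.of_forall fun m => setLIntegral_le_lintegral _ _)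

end

theorem stmt7_general (d : ℕ) (Ω : Set (EuclideanSpace ℝ (Fin d)))
    (hΩb : Bornology.IsBounded Ω)
    (H : ℝ → ℝ) (hHconv : ConvexOn ℝ Set.univ H)
    (v : EuclideanSpace ℝ (Fin d) → ℝ) (vm : ℕ → EuclideanSpace ℝ (Fin d) → ℝ)
    (hv : MemLp v 2 (volume.restrict Ω)) (hvm : ∀ m, MemLp (vm m) 2 (volume.restrict Ω))
    (hweak : ∀ g : EuclideanSpace ℝ (Fin d) → ℝ, MemLp g 2 (volume.restrict Ω) →
      Tendsto (fun m => ∫ x, vm m x * g x ∂(volume.restrict Ω)) atTop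
        (𝓝 (∫ x, v x * g x ∂(volume.restrict Ω)))) :
    ∫⁻ x, ENNReal.ofReal (H (v x)) ∂(volume.restrict Ω) ≤
      Filter.liminf (fun m => ∫⁻ x, ENNReal.ofReal (H (vm m x)) ∂(volume.restrict Ω)) atTop := by
  have : IsFiniteMeasure (volume.restrict Ω) := isFiniteMeasure_restrict.2 hΩb.measure_lt_top.ne
  have hweak' : WeakTendsto (volume.restrict Ω) ∞ vm v :=
    WeakTendsto.mono_exponent (p := 2) hweak le_top
  exact lintegral_ofReal_le_liminf_of_weakTendsto hHconv (hv.integrable one_le_two)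
    (fun m => (hvm m).integrable one_le_two) hweak'

/-- Weak lower semicontinuity of convex integral functionals: if `H : ℝ → [0,∞)` is convex
and continuous, `v` and the `vm` take values a.e. in a closed interval `I`, and `vm → v`
weakly in `L²(Ω)`, then `∫_Ω H(v) ≤ liminf ∫_Ω H(vm)` (integrals taken in `[0,∞]`). -/
theorem stmt7 (d : ℕ) (Ω : Set (EuclideanSpace ℝ (Fin d)))
    (hΩo : IsOpen Ω) (hΩb : Bornology.IsBounded Ω)
    (I : Set ℝ) (hIcl : IsClosed I) (hIoc : I.OrdConnected)
    (H : ℝ → ℝ) (hHconv : ConvexOn ℝ Set.univ H) (hHcont : Continuous H)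
    (hHnn : ∀ x : ℝ, 0 ≤ H x)
    (v : EuclideanSpace ℝ (Fin d) → ℝ) (vm : ℕ → EuclideanSpace ℝ (Fin d) → ℝ)
    (hv : MemLp v 2 (volume.restrict Ω)) (hvm : ∀ m, MemLp (vm m) 2 (volume.restrict Ω))
    (hvI : ∀ᵐ x ∂(volume.restrict Ω), v x ∈ I)
    (hvmI : ∀ m, ∀ᵐ x ∂(volume.restrict Ω), vm m x ∈ I)
    (hweak : ∀ g : EuclideanSpace ℝ (Fin d) → ℝ, MemLp g 2 (volume.restrict Ω) →
      Tendsto (fun m => ∫ x, vm m x * g x ∂(volume.restrict Ω)) atTop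
        (𝓝 (∫ x, v x * g x ∂(volume.restrict Ω)))) :
    ∫⁻ x, ENNReal.ofReal (H (v x)) ∂(volume.restrict Ω) ≤
      Filter.liminf (fun m => ∫⁻ x, ENNReal.ofReal (H (vm m x)) ∂(volume.restrict Ω)) atTop :=
  stmt7_general d Ω hΩb H hHconv v vm hv hvm hweak
end

section
/- (Minty's trick.) Let H : ℝ → ℝ be continuous and nondecreasing, let (X, μ) be a measure space with finite measure, let p > 1, and let (u_n)_{n ∈ ℕ} ⊂ L^p(X) and u ∈ L^p(X) be such that: (1) u_n converges weakly to u in L^p(X) (i.e. ∫_X u_n g dμ → ∫_X u g dμ for every g ∈ L^{p'}(X), where p' = p/(p−1)); (2) H(u_n) ∈ L¹(X) for every n, and there exists w ∈ L¹(X) such that H(u_n) → w strongly in L¹(X). Then w = H(u) almost everywhere on X. -/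
/-!
A weakly convergent sequence is bounded in `L^p` (Banach–Steinhaus), so `∫_{N_n} u_n → 0`
whenever `μ(N_n) → 0`. Fix `q` and `ε > 0` and let `A = {H q + ε ≤ w, u ≤ q - ε}`. As `H` is
monotone, `|H(u_n) - w| ≥ ε` wherever `u_n ≤ q` on `A`, so by `L¹` convergence `u_n > q` on `A`
outside sets of vanishing measure; in the weak limit `∫_A u ≥ q μ(A)`, which contradicts
`u ≤ q - ε` on `A` unless `μ(A) = 0`. Hence a.e. `H q < w → q ≤ u` for every rational `q`; applied
to `s ↦ -H (-s)` this also gives `w < H q → u ≤ q`, and continuity of `H` then forces `w = H u`.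
-/

open MeasureTheory Filter Topology
open scoped ENNReal

section

variable {X : Type*} [MeasurableSpace X] {μ : Measure X}

def HasSmallSetIntegrals (μ : Measure X) (u : ℕ → X → ℝ) : Prop :=
  ∀ N : ℕ → Set X, (∀ n, MeasurableSet (N n)) → Tendsto (fun n => μ.real (N n)) atTop (𝓝 0) →
    Tendsto (fun n => ∫ x in N n, u n x ∂μ) atTop (𝓝 0)

namespace HasSmallSetIntegrals

variable {u u' : ℕ → X → ℝ}

theorem neg (hu : HasSmallSetIntegrals μ u) : HasSmallSetIntegrals μ (-u) := fun N hN h0 => by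
  simpa only [Pi.neg_apply, integral_neg, neg_zero] using (hu N hN h0).neg

theorem congr (hu : HasSmallSetIntegrals μ u) (h : ∀ n, u n =ᵐ[μ] u' n) :
    HasSmallSetIntegrals μ u' := fun N hN h0 =>
  (hu N hN h0).congr fun n => integral_congr_ae (ae_restrict_of_ae (h n))

theorem of_abs_setIntegral_le {C r : ℝ} (hr : 0 < r)
    (hC : ∀ n A, MeasurableSet A → |∫ x in A, u n x ∂μ| ≤ C * μ.real A ^ r) :
    HasSmallSetIntegrals μ u := fun N hN h0 => by
  have hbound : Tendsto (fun n => C * μ.real (N n) ^ r) atTop (𝓝 0) := by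
    simpa [Real.zero_rpow hr.ne'] using
      ((Real.continuousAt_rpow_const 0 r (Or.inr hr.le)).tendsto.comp h0).const_mul C
  exact squeeze_zero_norm (fun n => hC n (N n) (hN n)) hbound

end HasSmallSetIntegrals

theorem exists_abs_setIntegral_le_mul_rpow {P Q : ℝ≥0∞} [P.HolderConjugate Q] (hQ : Q ≠ ∞)
    {u : ℕ → X → ℝ} (hu : ∀ n, MemLp (u n) P μ)
    (hbdd : ∀ g, MemLp g Q μ → BddAbove (Set.range fun n => |∫ x, u n x * g x ∂μ|)) :
    ∃ C, ∀ n A, MeasurableSet A → μ A ≠ ∞ →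
      |∫ x in A, u n x ∂μ| ≤ C * μ.real A ^ (1 / Q.toReal) := by
  have : Fact (1 ≤ P) := ⟨ENNReal.HolderConjugate.one_le P Q⟩
  have : Fact (1 ≤ Q) := ⟨ENNReal.HolderConjugate.one_le Q P⟩
  let T n : Lp ℝ Q μ →L[ℝ] ℝ :=
    (ContinuousLinearMap.mul ℝ ℝ).lpPairing μ P Q ((hu n).toLp (u n))
  have hT n (g : Lp ℝ Q μ) : T n g = ∫ x, u n x * g x ∂μ := by
    rw [ContinuousLinearMap.lpPairing_eq_integral]
    exact integral_congr_ae <| (hu n).coeFn_toLp.mono fun x hx => by simp [hx]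
  obtain ⟨C, hC⟩ := banach_steinhaus (g := T) fun g => by
    obtain ⟨c, hc⟩ := hbdd g (Lp.memLp g)
    exact ⟨c, fun n => by simpa only [hT, Real.norm_eq_abs] using hc ⟨n, rfl⟩⟩
  refine ⟨C, fun n A hA hμA => ?_⟩
  let g := indicatorConstLp Q hA hμA (1 : ℝ)
  have hTg : T n g = ∫ x in A, u n x ∂μ := by
    rw [hT, ← integral_indicator hA]
    have hg : ⇑g =ᵐ[μ] A.indicator fun _ => (1 : ℝ) := indicatorConstLp_coeFn
    refine integral_congr_ae (hg.mono fun x hx => ?_)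
    simp only [hx, ← Set.indicator_mul_right, mul_one]
  calc |∫ x in A, u n x ∂μ| = ‖T n g‖ := by rw [hTg, Real.norm_eq_abs]
    _ ≤ C * ‖g‖ := ((T n).le_opNorm g).trans (by gcongr; exact hC n)
    _ = C * μ.real A ^ (1 / Q.toReal) := by
      rw [norm_indicatorConstLp (ENNReal.HolderConjugate.ne_zero Q P) hQ, norm_one, one_mul]

theorem HasSmallSetIntegrals.of_bddAbove_integral_mul [IsFiniteMeasure μ] {P Q : ℝ≥0∞}
    [P.HolderConjugate Q] (hQ : Q ≠ ∞) {u : ℕ → X → ℝ} (hu : ∀ n, MemLp (u n) P μ)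
    (hbdd : ∀ g, MemLp g Q μ → BddAbove (Set.range fun n => |∫ x, u n x * g x ∂μ|)) :
    HasSmallSetIntegrals μ u := by
  obtain ⟨C, hC⟩ := exists_abs_setIntegral_le_mul_rpow hQ hu hbdd
  exact of_abs_setIntegral_le
    (one_div_pos.2 (ENNReal.toReal_pos (ENNReal.HolderConjugate.ne_zero Q P) hQ))
    fun n A hA => hC n A hA (measure_ne_top μ A)

theorem tendsto_setIntegral_of_tendsto_integral_mul [IsFiniteMeasure μ] {Q : ℝ≥0∞}
    {u : ℕ → X → ℝ} {v : X → ℝ}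
    (h : ∀ g, MemLp g Q μ →
      Tendsto (fun n => ∫ x, u n x * g x ∂μ) atTop (𝓝 (∫ x, v x * g x ∂μ)))
    {A : Set X} (hA : MeasurableSet A) :
    Tendsto (fun n => ∫ x in A, u n x ∂μ) atTop (𝓝 (∫ x in A, v x ∂μ)) := by
  simpa only [← Set.indicator_mul_right, mul_one, integral_indicator hA] using
    h _ (memLp_indicator_const Q hA 1 (Or.inr (measure_ne_top μ A)))

theorem tendsto_measureReal_of_subset_le_abs [IsFiniteMeasure μ] {f : ℕ → X → ℝ}
    (hf : ∀ n, Integrable (f n) μ) (hlim : Tendsto (fun n => ∫ x, |f n x| ∂μ) atTop (𝓝 0))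
    {ε : ℝ} (hε : 0 < ε) {S : ℕ → Set X} (hS : ∀ n, S n ⊆ {x | ε ≤ |f n x|}) :
    Tendsto (fun n => μ.real (S n)) atTop (𝓝 0) := by
  refine squeeze_zero (fun n => measureReal_nonneg) (fun n => ?_)
    (by simpa using hlim.div_const ε)
  rw [le_div_iff₀' hε]
  exact (mul_le_mul_of_nonneg_left (measureReal_mono (hS n)) hε.le).trans
    (mul_meas_ge_le_integral_of_nonneg (ae_of_all _ fun x => abs_nonneg _) (hf n).abs ε)

theorem mul_measureReal_sdiff_add_setIntegral_le [IsFiniteMeasure μ] {f : X → ℝ} {s t : Set X}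
    {c : ℝ} (hf : Integrable f μ) (hs : MeasurableSet s) (ht : MeasurableSet t) (hst : s ⊆ t)
    (hc : ∀ x ∈ t \ s, c ≤ f x) :
    c * (μ.real t - μ.real s) + ∫ x in s, f x ∂μ ≤ ∫ x in t, f x ∂μ := by
  have := setIntegral_ge_of_const_le_real (ht.diff hs) (measure_ne_top μ _) hc hf.integrableOn
  rw [measureReal_sdiff hst hs, setIntegral_sdiff hs hf.integrableOn hst] at this
  linarith

theorem ae_le_of_forall_measure_eq_zero {f g : X → ℝ} {a b : ℝ}
    (h : ∀ ε > 0, μ {x | a + ε ≤ f x ∧ g x ≤ b - ε} = 0) :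
    ∀ᵐ x ∂μ, a < f x → b ≤ g x := by
  refine ae_iff.2 (measure_mono_null (fun x hx => ?_)
    (measure_iUnion_null fun k : ℕ => h (1 / (k + 1)) Nat.one_div_pos_of_nat))
  obtain ⟨hfx, hgx⟩ : a < f x ∧ g x < b := by simpa using hx
  obtain ⟨k, hk⟩ := exists_nat_one_div_lt (lt_min (sub_pos.2 hfx) (sub_pos.2 hgx))
  have := min_le_left (f x - a) (b - g x)
  have := min_le_right (f x - a) (b - g x)
  exact Set.mem_iUnion.2 ⟨k, by constructor <;> linarith⟩

theorem eq_comp_of_forall_rat {H : ℝ → ℝ} (hH : Continuous H) {a b : ℝ}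
    (h₁ : ∀ q : ℚ, H q < a → (q : ℝ) ≤ b) (h₂ : ∀ q : ℚ, a < H q → b ≤ q) : a = H b := by
  rcases lt_trichotomy a (H b) with hlt | heq | hgt
  · obtain ⟨l, hlb, hl⟩ := exists_Ioc_subset_of_mem_nhds
      (hH.continuousAt.eventually (lt_mem_nhds hlt)) (exists_lt b)
    obtain ⟨q, hlq, hqb⟩ := exists_rat_btwn hlb
    linarith [h₂ q (hl ⟨hlq, hqb.le⟩)]
  · exact heq
  · obtain ⟨r, hbr, hr⟩ := exists_Ico_subset_of_mem_nhds
      (hH.continuousAt.eventually (gt_mem_nhds hgt)) (exists_gt b)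
    obtain ⟨q, hbq, hqr⟩ := exists_rat_btwn hbr
    linarith [h₁ q (hr ⟨hbq.le, hqr⟩)]

section Minty

variable [IsFiniteMeasure μ] {H : ℝ → ℝ} {u : ℕ → X → ℝ} {v w : X → ℝ}

theorem measure_levelSet_eq_zero (hH : Monotone H) (hum : ∀ n, Measurable (u n))
    (hvm : Measurable v) (hwm : Measurable w) (hu : ∀ n, Integrable (u n) μ)
    (hv : Integrable v μ) (hHu : ∀ n, Integrable (fun x => H (u n x)) μ) (hw : Integrable w μ)
    (hsmall : HasSmallSetIntegrals μ u)
    (hweak : ∀ A, MeasurableSet A →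
      Tendsto (fun n => ∫ x in A, u n x ∂μ) atTop (𝓝 (∫ x in A, v x ∂μ)))
    (hstrong : Tendsto (fun n => ∫ x, |H (u n x) - w x| ∂μ) atTop (𝓝 0))
    (q : ℝ) {ε : ℝ} (hε : 0 < ε) :
    μ {x | H q + ε ≤ w x ∧ v x ≤ q - ε} = 0 := by
  set A := {x | H q + ε ≤ w x ∧ v x ≤ q - ε}
  have hA : MeasurableSet A :=
    (measurableSet_le measurable_const hwm).inter (measurableSet_le hvm measurable_const)
  let N n := A ∩ {x | u n x ≤ q}
  have hN n : MeasurableSet (N n) := hA.inter (measurableSet_le (hum n) measurable_const)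
  have hN0 : Tendsto (fun n => μ.real (N n)) atTop (𝓝 0) := by
    refine tendsto_measureReal_of_subset_le_abs (fun n => (hHu n).sub hw) hstrong hε
      fun n x hx => ?_
    have := hH hx.2
    have := hx.1.1
    show ε ≤ |H (u n x) - w x|
    exact le_abs.2 (Or.inr (by linarith))
  have hlow n : q * (μ.real A - μ.real (N n)) + ∫ x in N n, u n x ∂μ ≤ ∫ x in A, u n x ∂μ :=
    mul_measureReal_sdiff_add_setIntegral_le (hu n) (hN n) hA Set.inter_subset_left
      fun x hx => (not_le.1 fun h => hx.2 ⟨hx.1, h⟩).le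
  have hlowlim : Tendsto (fun n => q * (μ.real A - μ.real (N n)) + ∫ x in N n, u n x ∂μ)
      atTop (𝓝 (q * μ.real A)) := by
    simpa using ((hN0.const_sub (μ.real A)).const_mul q).add (hsmall N hN hN0)
  have hupper : ∫ x in A, v x ∂μ ≤ (q - ε) * μ.real A := by
    simpa [mul_comm] using setIntegral_mono_on hv.integrableOn
      (integrableOn_const (measure_ne_top μ A)) hA fun x hx => hx.2
  have := (le_of_tendsto_of_tendsto' hlowlim (hweak A hA) hlow).trans hupper
  exact (measureReal_eq_zero_iff (measure_ne_top μ A)).1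
    (le_antisymm (by nlinarith) measureReal_nonneg)

theorem ae_eq_comp_of_measurable (hHc : Continuous H) (hH : Monotone H)
    (hum : ∀ n, Measurable (u n)) (hvm : Measurable v) (hwm : Measurable w)
    (hu : ∀ n, Integrable (u n) μ) (hv : Integrable v μ)
    (hHu : ∀ n, Integrable (fun x => H (u n x)) μ) (hw : Integrable w μ)
    (hsmall : HasSmallSetIntegrals μ u)
    (hweak : ∀ A, MeasurableSet A →
      Tendsto (fun n => ∫ x in A, u n x ∂μ) atTop (𝓝 (∫ x in A, v x ∂μ)))
    (hstrong : Tendsto (fun n => ∫ x, |H (u n x) - w x| ∂μ) atTop (𝓝 0)) :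
    w =ᵐ[μ] fun x => H (v x) := by
  have h₁ (q : ℚ) : ∀ᵐ x ∂μ, H q < w x → (q : ℝ) ≤ v x :=
    ae_le_of_forall_measure_eq_zero fun ε hε =>
      measure_levelSet_eq_zero hH hum hvm hwm hu hv hHu hw hsmall hweak hstrong q hε
  -- the reflected data `s ↦ -H (-s)`, `-u`, `-v`, `-w` satisfy the same hypotheses
  have h₂ (q : ℚ) : ∀ᵐ x ∂μ, -H q < -w x → -(q : ℝ) ≤ -v x :=
    ae_le_of_forall_measure_eq_zero fun ε hε => by
      simpa using measure_levelSet_eq_zero (H := fun s => -H (-s)) (u := -u) (v := -v) (w := -w)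
        (fun a b hab => neg_le_neg (hH (neg_le_neg hab))) (fun n => (hum n).neg) hvm.neg
        hwm.neg (fun n => (hu n).neg) hv.neg (fun n => by simpa using (hHu n).neg) hw.neg
        hsmall.neg (fun A hA => by simpa [integral_neg] using (hweak A hA).neg)
        (by simpa [neg_add_eq_sub, abs_sub_comm] using hstrong) (-q) hε
  filter_upwards [ae_all_iff.2 h₁, ae_all_iff.2 h₂] with x hx₁ hx₂
  exact eq_comp_of_forall_rat hHc hx₁ fun q hq => by simpa using hx₂ q (by simpa using hq)

theorem ae_eq_comp_of_tendsto (hHc : Continuous H) (hH : Monotone H)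
    (hu : ∀ n, Integrable (u n) μ) (hv : Integrable v μ)
    (hHu : ∀ n, Integrable (fun x => H (u n x)) μ) (hw : Integrable w μ)
    (hsmall : HasSmallSetIntegrals μ u)
    (hweak : ∀ A, MeasurableSet A →
      Tendsto (fun n => ∫ x in A, u n x ∂μ) atTop (𝓝 (∫ x in A, v x ∂μ)))
    (hstrong : Tendsto (fun n => ∫ x, |H (u n x) - w x| ∂μ) atTop (𝓝 0)) :
    w =ᵐ[μ] fun x => H (v x) := by
  have hu' n : u n =ᵐ[μ] (hu n).aemeasurable.mk (u n) := (hu n).aemeasurable.ae_eq_mk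
  have hv' : v =ᵐ[μ] hv.aemeasurable.mk v := hv.aemeasurable.ae_eq_mk
  have hw' : w =ᵐ[μ] hw.aemeasurable.mk w := hw.aemeasurable.ae_eq_mk
  have hset {f g : X → ℝ} (h : f =ᵐ[μ] g) (A : Set X) : ∫ x in A, f x ∂μ = ∫ x in A, g x ∂μ :=
    integral_congr_ae (ae_restrict_of_ae h)
  have hmain := ae_eq_comp_of_measurable hHc hH (fun n => (hu n).aemeasurable.measurable_mk)
    hv.aemeasurable.measurable_mk hw.aemeasurable.measurable_mk (fun n => (hu n).congr (hu' n))
    (hv.congr hv') (fun n => (hHu n).congr ((hu' n).fun_comp H)) (hw.congr hw')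
    (hsmall.congr hu')
    (fun A hA => by rw [← hset hv' A]; exact (hweak A hA).congr fun n => hset (hu' n) A)
    (hstrong.congr fun n => integral_congr_ae <| by
      filter_upwards [hu' n, hw'] with x h₁ h₂
      rw [h₁, h₂])
  filter_upwards [hmain, hw', hv'] with x h h₁ h₂
  rw [h₁, h, h₂]

end Minty

end

/-- Minty's trick: if `H` is continuous nondecreasing, `uₙ → u` weakly in `L^p(X)` (`p > 1`,
finite measure), `H(uₙ) ∈ L¹` and `H(uₙ) → w` strongly in `L¹(X)`, then `w = H(u)` a.e. -/
theorem stmt8 {X : Type*} [MeasurableSpace X] (μ : Measure X) [IsFiniteMeasure μ]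
    (H : ℝ → ℝ) (hHcont : Continuous H) (hHmono : Monotone H)
    (p : ℝ) (hp : 1 < p)
    (u : ℕ → X → ℝ) (ulim : X → ℝ)
    (hu : ∀ n, MemLp (u n) (ENNReal.ofReal p) μ)
    (hulim : MemLp ulim (ENNReal.ofReal p) μ)
    (hweak : ∀ g : X → ℝ, MemLp g (ENNReal.ofReal (p / (p - 1))) μ →
      Tendsto (fun n => ∫ x, u n x * g x ∂μ) atTop (𝓝 (∫ x, ulim x * g x ∂μ)))
    (hHu : ∀ n, Integrable (fun x => H (u n x)) μ)
    (w : X → ℝ) (hw : Integrable w μ)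
    (hstrong : Tendsto (fun n => ∫ x, |H (u n x) - w x| ∂μ) atTop (𝓝 0)) :
    w =ᵐ[μ] fun x => H (ulim x) := by
  have : (ENNReal.ofReal p).HolderConjugate (ENNReal.ofReal (p / (p - 1))) :=
    (Real.HolderConjugate.conjExponent hp).ennrealOfReal
  have hp₁ : 1 ≤ ENNReal.ofReal p := ENNReal.one_le_ofReal.2 hp.le
  exact ae_eq_comp_of_tendsto hHcont hHmono (fun n => (hu n).integrable hp₁)
    (hulim.integrable hp₁) hHu hw
    (.of_bddAbove_integral_mul ENNReal.ofReal_ne_top hu fun g hg =>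
      (hweak g hg).abs.bddAbove_range)
    (fun A hA => tendsto_setIntegral_of_tendsto_integral_mul hweak hA) hstrong
end

section
/- (Discontinuous Ascoli–Arzelà theorem.) Let (K, d_K) be a compact metric space and (E, d_E) a complete metric space. Let (v_m)_{m ∈ ℕ} be a sequence of functions K → E such that there exist ω : K × K → [0, ∞] and a sequence (δ_m)_{m ∈ ℕ} ⊂ [0, ∞) satisfying: ω(s, s') → 0 as d_K(s, s') → 0; δ_m → 0 as m → ∞; and d_E(v_m(s), v_m(s')) ≤ ω(s, s') + δ_m for all s, s' ∈ K and m ∈ ℕ. Assume moreover that for every s ∈ K the set {v_m(s) : m ∈ ℕ} is relatively compact in E. Then there exist a subsequence (v_{m_k})_{k ∈ ℕ} and a continuous function v : K → E such that sup_{s ∈ K} d_E(v_{m_k}(s), v(s)) → 0 as k → ∞. -/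
open Filter Topology
open scoped ENNReal

/-- Discontinuous Ascoli–Arzelà theorem: a sequence of (not necessarily continuous)
functions `vₘ : K → E` on a compact metric space, with pointwise relatively compact
values and `d_E(vₘ s, vₘ s') ≤ ω(s,s') + δₘ` where `ω(s,s') → 0` as `d_K(s,s') → 0`
and `δₘ → 0`, has a subsequence converging uniformly to a continuous limit. -/
theorem stmt9 {K E : Type*} [MetricSpace K] [CompactSpace K]
    [MetricSpace E] [CompleteSpace E]
    (v : ℕ → K → E) (ω : K × K → ℝ≥0∞) (δ : ℕ → ℝ)
    (hδnn : ∀ m, 0 ≤ δ m) (hδ : Tendsto δ atTop (𝓝 0))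
    (hω : ∀ ε : ℝ≥0∞, 0 < ε → ∃ ρ > (0:ℝ), ∀ s s' : K, dist s s' ≤ ρ → ω (s, s') ≤ ε)
    (hbound : ∀ (m : ℕ) (s s' : K),
      edist (v m s) (v m s') ≤ ω (s, s') + ENNReal.ofReal (δ m))
    (hcpt : ∀ s : K, IsCompact (closure (Set.range fun m => v m s))) :
    ∃ φ : ℕ → ℕ, StrictMono φ ∧ ∃ w : K → E, Continuous w ∧
      TendstoUniformly (fun k => v (φ k)) w atTop := by
  -- countable dense subset
  obtain ⟨D, hDc, hDd⟩ := TopologicalSpace.exists_countable_dense K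
  haveI : Countable D := hDc.to_subtype
  -- extract a subsequence converging pointwise on D, via compactness of a countable product
  set S : Set (D → E) := Set.univ.pi (fun t => closure (Set.range fun m => v m (t : K)))
    with hSdef
  have hScpt : IsCompact S := isCompact_univ_pi fun t => hcpt (t : K)
  have hmem : ∀ m, (fun t : D => v m (t : K)) ∈ S := fun m =>
    Set.mem_univ_pi.mpr fun t => subset_closure ⟨m, rfl⟩
  obtain ⟨a, -, φ, hφ, ha⟩ :=
    hScpt.tendsto_subseq (x := fun m => fun t : D => v m (t : K)) hmem
  have hpt : ∀ t : D, Tendsto (fun k => v (φ k) (t : K)) atTop (𝓝 (a t)) := by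
    intro t
    exact (tendsto_pi_nhds.mp ha) t
  have hδφ : Tendsto (fun k => δ (φ k)) atTop (𝓝 0) := hδ.comp hφ.tendsto_atTop
  -- uniform Cauchy
  have hUC : UniformCauchySeqOn (fun k => v (φ k)) atTop Set.univ := by
    rw [Metric.uniformCauchySeqOn_iff]
    intro ε hε
    have hε5 : 0 < ε / 5 := by linarith
    obtain ⟨ρ, hρ, hρω⟩ := hω (ENNReal.ofReal (ε / 5)) (ENNReal.ofReal_pos.mpr hε5)
    obtain ⟨M, hM⟩ := (eventually_atTop.mp (hδφ.eventually (gt_mem_nhds hε5)))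
    -- finite cover by balls of radius ρ centered in D
    have hcover : (Set.univ : Set K) ⊆ ⋃ t : D, Metric.ball (t : K) ρ := by
      intro s _
      obtain ⟨t, htD, ht⟩ := hDd.exists_dist_lt s hρ
      exact Set.mem_iUnion.mpr ⟨⟨t, htD⟩, by simpa [Metric.mem_ball, dist_comm] using ht⟩
    obtain ⟨I, hI⟩ := isCompact_univ.elim_finite_subcover
      (fun t : D => Metric.ball (t : K) ρ) (fun t => Metric.isOpen_ball) hcover
    -- Cauchy at each center
    have hN : ∀ t : D, ∃ N, ∀ k ≥ N, ∀ l ≥ N,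
        dist (v (φ k) (t : K)) (v (φ l) (t : K)) < ε / 5 := fun t =>
      Metric.cauchySeq_iff.mp (hpt t).cauchySeq (ε / 5) hε5
    choose N hNs using hN
    refine ⟨max M (I.sup N), fun k hk l hl x _ => ?_⟩
    obtain ⟨t, htI, hxt⟩ := Set.mem_iUnion₂.mp (hI (Set.mem_univ x))
    have hxt' : dist x (t : K) ≤ ρ := le_of_lt (Metric.mem_ball.mp hxt)
    have hkM : M ≤ k := le_trans (le_max_left _ _) hk
    have hlM : M ≤ l := le_trans (le_max_left _ _) hl
    have hkN : N t ≤ k := le_trans (le_trans (Finset.le_sup htI) (le_max_right _ _)) hk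
    have hlN : N t ≤ l := le_trans (le_trans (Finset.le_sup htI) (le_max_right _ _)) hl
    have key : ∀ j, M ≤ j → ∀ s s' : K, dist s s' ≤ ρ →
        dist (v (φ j) s) (v (φ j) s') ≤ 2 * (ε / 5) := by
      intro j hj s s' hss
      have h1 : edist (v (φ j) s) (v (φ j) s') ≤
          ENNReal.ofReal (ε / 5) + ENNReal.ofReal (ε / 5) :=
        le_trans (hbound (φ j) s s') (add_le_add (hρω s s' hss)
          (ENNReal.ofReal_le_ofReal (le_of_lt (hM j hj))))
      rw [← ENNReal.ofReal_add (le_of_lt hε5) (le_of_lt hε5)] at h1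
      have := (edist_le_ofReal (by linarith)).mp h1
      linarith
    have h2 : dist (v (φ k) x) (v (φ k) (t : K)) ≤ 2 * (ε / 5) := key k hkM x t hxt'
    have h3 : dist (v (φ l) (t : K)) (v (φ l) x) ≤ 2 * (ε / 5) :=
      key l hlM (t : K) x (by rwa [dist_comm])
    have h4 : dist (v (φ k) (t : K)) (v (φ l) (t : K)) < ε / 5 := hNs t k hkN l hlN
    calc dist (v (φ k) x) (v (φ l) x)
        ≤ dist (v (φ k) x) (v (φ k) (t : K)) + dist (v (φ k) (t : K)) (v (φ l) (t : K))
          + dist (v (φ l) (t : K)) (v (φ l) x) := dist_triangle4 _ _ _ _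
      _ < ε := by linarith
  -- pointwise limit
  have hcs : ∀ s : K, ∃ e : E, Tendsto (fun k => v (φ k) s) atTop (𝓝 e) := by
    intro s
    apply cauchySeq_tendsto_of_complete
    rw [Metric.cauchySeq_iff]
    intro ε hε
    obtain ⟨nn, hnn⟩ := Metric.uniformCauchySeqOn_iff.mp hUC ε hε
    exact ⟨nn, fun k hk l hl => hnn k hk l hl s (Set.mem_univ s)⟩
  choose w hw using hcs
  -- the limit satisfies the modulus bound, hence is continuous
  have hwd : ∀ s s' : K, edist (w s) (w s') ≤ ω (s, s') := by
    intro s s'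
    have h1 : Tendsto (fun k => edist (v (φ k) s) (v (φ k) s')) atTop
        (𝓝 (edist (w s) (w s'))) := (hw s).edist (hw s')
    have h2 : Tendsto (fun k => ω (s, s') + ENNReal.ofReal (δ (φ k))) atTop
        (𝓝 (ω (s, s'))) := by
      have : Tendsto (fun k => ENNReal.ofReal (δ (φ k))) atTop (𝓝 0) := by
        simpa using ENNReal.tendsto_ofReal hδφ
      simpa using tendsto_const_nhds.add this
    exact le_of_tendsto_of_tendsto' h1 h2 (fun k => hbound (φ k) s s')
  have hwc : Continuous w := by
    rw [Metric.continuous_iff]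
    intro b ε hε
    have hε2 : 0 < ε / 2 := by linarith
    obtain ⟨ρ, hρ, hρω⟩ := hω (ENNReal.ofReal (ε / 2)) (ENNReal.ofReal_pos.mpr hε2)
    refine ⟨ρ, hρ, fun s hs => ?_⟩
    have : edist (w s) (w b) ≤ ENNReal.ofReal (ε / 2) :=
      le_trans (hwd s b) (hρω s b (le_of_lt hs))
    have := (edist_le_ofReal (le_of_lt hε2)).mp this
    linarith
  refine ⟨φ, hφ, w, hwc, ?_⟩
  rw [← tendstoUniformlyOn_univ]
  exact hUC.tendstoUniformlyOn_of_tendsto (fun s _ => hw s)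
end

section
/- (Discontinuous Ascoli–Arzelà theorem, variant condition.) Let (K, d_K) be a compact metric space and (E, d_E) a complete metric space. Let (v_m)_{m ∈ ℕ} be a sequence of functions K → E such that: for every ε > 0 there exist M ∈ ℕ and ρ > 0 with d_E(v_m(s), v_m(s')) ≤ ε whenever m ≥ M and d_K(s, s') ≤ ρ; and for every s ∈ K the set {v_m(s) : m ∈ ℕ} is relatively compact in E. Then there exist a subsequence (v_{m_k})_{k ∈ ℕ} and a continuous function v : K → E such that sup_{s ∈ K} d_E(v_{m_k}(s), v(s)) → 0 as k → ∞. -/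
open Filter Topology

/-- Discontinuous Ascoli–Arzelà theorem (variant condition): if for every `ε > 0` there are
`M ∈ ℕ` and `ρ > 0` such that `d_E(vₘ s, vₘ s') ≤ ε` whenever `m ≥ M` and `d_K(s,s') ≤ ρ`,
and the sets `{vₘ s : m ∈ ℕ}` are relatively compact, then a subsequence of `(vₘ)`
converges uniformly to a continuous limit. -/
theorem stmt10 {K E : Type*} [MetricSpace K] [CompactSpace K]
    [MetricSpace E] [CompleteSpace E]
    (v : ℕ → K → E)
    (hcond : ∀ ε : ℝ, 0 < ε → ∃ M : ℕ, ∃ ρ > (0:ℝ), ∀ m ≥ M, ∀ s s' : K,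
      dist s s' ≤ ρ → dist (v m s) (v m s') ≤ ε)
    (hcpt : ∀ s : K, IsCompact (closure (Set.range fun m => v m s))) :
    ∃ φ : ℕ → ℕ, StrictMono φ ∧ ∃ w : K → E, Continuous w ∧
      TendstoUniformly (fun k => v (φ k)) w atTop := by
  rcases isEmpty_or_nonempty K with hK | hK
  · refine ⟨id, strictMono_id, v 0, continuous_iff_continuousAt.2 fun s => isEmptyElim s, ?_⟩
    rw [Metric.tendstoUniformly_iff]
    exact fun ε hε => Filter.Eventually.of_forall fun k x => isEmptyElim x
  -- countable dense set
  set g : ℕ → K := TopologicalSpace.denseSeq K with hg_def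
  have hg : DenseRange g := TopologicalSpace.denseRange_denseSeq K
  -- extract a subsequence converging pointwise on the dense set, via compactness of the
  -- countable product of the pointwise closures
  have hpi : IsCompact (Set.univ.pi fun n => closure (Set.range fun m => v m (g n))) :=
    isCompact_univ_pi fun n => hcpt (g n)
  obtain ⟨a, -, ψ, hψ, ha⟩ := hpi.tendsto_subseq (x := fun m n => v m (g n))
    (fun m n _ => subset_closure ⟨m, rfl⟩)
  rw [tendsto_pi_nhds] at ha
  have ha' : ∀ n, Tendsto (fun k => v (ψ k) (g n)) atTop (𝓝 (a n)) := fun n => ha n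
  -- asymptotic equicontinuity of the subsequence
  have hA : ∀ ε : ℝ, 0 < ε → ∃ M : ℕ, ∃ ρ > (0:ℝ), ∀ k ≥ M, ∀ s s' : K,
      dist s s' ≤ ρ → dist (v (ψ k) s) (v (ψ k) s') ≤ ε := by
    intro ε hε
    obtain ⟨M, ρ, hρ, h⟩ := hcond ε hε
    exact ⟨M, ρ, hρ, fun k hk => h (ψ k) (le_trans hk hψ.le_apply)⟩
  -- pointwise Cauchy everywhere
  have hcau : ∀ s : K, CauchySeq fun k => v (ψ k) s := by
    intro s
    rw [Metric.cauchySeq_iff]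
    intro ε hε
    obtain ⟨M, ρ, hρ, h⟩ := hA (ε / 4) (by linarith)
    obtain ⟨n, hn⟩ : ∃ n, dist s (g n) ≤ ρ := by
      obtain ⟨n, hn⟩ := Metric.denseRange_iff.1 hg s ρ hρ
      exact ⟨n, hn.le⟩
    have hc : CauchySeq fun k => v (ψ k) (g n) := (ha' n).cauchySeq
    rw [Metric.cauchySeq_iff] at hc
    obtain ⟨N, hN⟩ := hc (ε / 4) (by linarith)
    refine ⟨max M N, fun k hk l hl => ?_⟩
    have h1 := h k (le_of_max_le_left hk) s (g n) hn
    have h2 := h l (le_of_max_le_left hl) s (g n) hn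
    have h3 := hN k (le_of_max_le_right hk) l (le_of_max_le_right hl)
    have h4 := dist_comm (v (ψ l) s) (v (ψ l) (g n))
    calc dist (v (ψ k) s) (v (ψ l) s)
        ≤ dist (v (ψ k) s) (v (ψ k) (g n)) + dist (v (ψ k) (g n)) (v (ψ l) (g n))
          + dist (v (ψ l) (g n)) (v (ψ l) s) := dist_triangle4 _ _ _ _
      _ < ε := by rw [h4] at h2; linarith
  -- the pointwise limit
  have hlim : ∀ s : K, ∃ y : E, Tendsto (fun k => v (ψ k) s) atTop (𝓝 y) :=
    fun s => cauchySeq_tendsto_of_complete (hcau s)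
  choose w hw using hlim
  -- modulus of continuity for the limit
  have hwmod : ∀ ε : ℝ, 0 < ε → ∃ ρ > (0:ℝ), ∀ s s' : K,
      dist s s' ≤ ρ → dist (w s) (w s') ≤ ε := by
    intro ε hε
    obtain ⟨M, ρ, hρ, h⟩ := hA ε hε
    refine ⟨ρ, hρ, fun s s' hss => ?_⟩
    exact le_of_tendsto ((hw s).dist (hw s'))
      (Filter.eventually_atTop.2 ⟨M, fun k hk => h k hk s s' hss⟩)
  have hwcont : Continuous w := by
    rw [Metric.continuous_iff]
    intro b ε hε
    obtain ⟨ρ, hρ, h⟩ := hwmod (ε / 2) (by linarith)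
    exact ⟨ρ, hρ, fun s hsb => lt_of_le_of_lt (h s b hsb.le) (by linarith)⟩
  -- uniform convergence
  refine ⟨ψ, hψ, w, hwcont, ?_⟩
  rw [Metric.tendstoUniformly_iff]
  intro ε hε
  obtain ⟨M, ρ, hρ, h⟩ := hA (ε / 4) (by linarith)
  -- finite cover by balls centered at points of the dense sequence
  have hcover : (Set.univ : Set K) ⊆ ⋃ n, Metric.ball (g n) ρ := by
    intro s _
    obtain ⟨n, hn⟩ := Metric.denseRange_iff.1 hg s ρ hρ
    exact Set.mem_iUnion.2 ⟨n, by simpa [Metric.mem_ball, dist_comm] using hn⟩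
  obtain ⟨T, hT⟩ := isCompact_univ.elim_finite_subcover (fun n => Metric.ball (g n) ρ)
    (fun n => Metric.isOpen_ball) hcover
  have hev : ∀ᶠ k in atTop, M ≤ k ∧ ∀ n ∈ T, dist (v (ψ k) (g n)) (w (g n)) ≤ ε / 4 := by
    refine (eventually_ge_atTop M).and ?_
    rw [eventually_all_finset]
    intro n _
    have := Metric.tendsto_atTop.1 (hw (g n)) (ε / 4) (by linarith)
    obtain ⟨N, hN⟩ := this
    exact eventually_atTop.2 ⟨N, fun k hk => (hN k hk).le⟩
  filter_upwards [hev] with k hk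
  obtain ⟨hkM, hkT⟩ := hk
  intro s
  obtain ⟨n, hnT, hs⟩ : ∃ n ∈ T, s ∈ Metric.ball (g n) ρ := by
    have := hT (Set.mem_univ s)
    simpa using this
  have hsn : dist s (g n) ≤ ρ := (Metric.mem_ball.1 hs).le
  have h1 : dist (w s) (w (g n)) ≤ ε / 4 :=
    le_of_tendsto ((hw s).dist (hw (g n)))
      (Filter.eventually_atTop.2 ⟨M, fun l hl => h l hl s (g n) hsn⟩)
  have h2 : dist (v (ψ k) (g n)) (w (g n)) ≤ ε / 4 := hkT n hnT
  have h3 : dist (v (ψ k) s) (v (ψ k) (g n)) ≤ ε / 4 := h k hkM s (g n) hsn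
  calc dist (w s) (v (ψ k) s)
      ≤ dist (w s) (w (g n)) + dist (w (g n)) (v (ψ k) (g n))
        + dist (v (ψ k) (g n)) (v (ψ k) s) := dist_triangle4 _ _ _ _
    _ < ε := by
        rw [dist_comm (w (g n)) (v (ψ k) (g n)), dist_comm (v (ψ k) (g n)) (v (ψ k) s)]
        linarith
end

section
/- Let (t⁽ⁿ⁾)_{n ∈ ℤ} be a strictly increasing sequence of real numbers with δt^{(n+1/2)} := t^{(n+1)} − t^{(n)} ≤ δt for all n (for some δt > 0), t^{(n)} → −∞ as n → −∞ and t^{(n)} → +∞ as n → +∞. For t ∈ ℝ, let n(t) be the unique n ∈ ℤ with t ∈ (t^{(n)}, t^{(n+1)}]. Let (a^{(n)})_{n ∈ ℤ} be a family of nonnegative real numbers with only finitely many nonzero values. Then for every τ > 0 and every s ∈ ℝ: ∫_ℝ ( ∑_{n = n(t)+1}^{n(t+τ)} δt^{(n+1/2)} ) · a^{(n(t+s)+1)} dt ≤ (τ + δt) · ∑_{n ∈ ℤ} δt^{(n+1/2)} a^{(n+1)}. -/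
/-!
Only finitely many `a (n + 1)` are nonzero, so `r ↦ a (n(r) + 1)` is a finite sum of indicators of
the cells `(t n, t (n + 1)]`; its integral is therefore `∑ (t (n + 1) - t n) a (n + 1)`, and it is
translation invariant. The inner sum telescopes to `t (n(r + τ) + 1) - t (n(r) + 1)`, which is at
most `τ + δt`, so the integrand is dominated by `(τ + δt) a (n(r + s) + 1)`.
-/

open MeasureTheory Filter Topology

theorem Int.sum_Icc_add_one_sub {M : Type*} [AddCommGroup M] (f : ℤ → M) {m n : ℤ}
    (hmn : m ≤ n) : ∑ i ∈ Finset.Icc (m + 1) n, (f (i + 1) - f i) = f (n + 1) - f (m + 1) := by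
  induction n, hmn using Int.leInduction with
  | base => simp
  | succ n hmn ih =>
    rw [← Finset.insert_Icc_right_eq_Icc_add_one (by omega), Finset.sum_insert (by simp), ih]
    abel

section Partition

variable {t : ℤ → ℝ} {nt : ℝ → ℤ}

theorem index_eq_of_mem_Ioc (ht : Monotone t)
    (hnt : ∀ r, r ∈ Set.Ioc (t (nt r)) (t (nt r + 1))) {n : ℤ} {r : ℝ}
    (hr : r ∈ Set.Ioc (t n) (t (n + 1))) : nt r = n := by
  by_contra hne
  exact Set.disjoint_left.mp (ht.pairwise_disjoint_on_Ioc_succ hne) (hnt r) hr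

theorem index_monotone (ht : Monotone t)
    (hnt : ∀ r, r ∈ Set.Ioc (t (nt r)) (t (nt r + 1))) : Monotone nt := by
  intro r r' hrr'
  by_contra! hlt
  have : t (nt r' + 1) ≤ t (nt r) := ht (by omega)
  linarith [(hnt r).1, (hnt r').2]

theorem sum_Icc_index_sub_le (ht : Monotone t)
    (hnt : ∀ r, r ∈ Set.Ioc (t (nt r)) (t (nt r + 1))) {δt : ℝ}
    (hstep : ∀ n, t (n + 1) - t n ≤ δt) {r r' : ℝ} (hrr' : r ≤ r') :
    ∑ n ∈ Finset.Icc (nt r + 1) (nt r'), (t (n + 1) - t n) ≤ r' - r + δt := by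
  rw [Int.sum_Icc_add_one_sub t (index_monotone ht hnt hrr')]
  linarith [(hnt r).2, (hnt r').1, hstep (nt r')]

theorem comp_index_eq_sum_indicator (ht : Monotone t)
    (hnt : ∀ r, r ∈ Set.Ioc (t (nt r)) (t (nt r + 1))) {g : ℤ → ℝ}
    (hg : (Function.support g).Finite) :
    (fun r ↦ g (nt r)) =
      fun r ↦ ∑ n ∈ hg.toFinset, (Set.Ioc (t n) (t (n + 1))).indicator (fun _ ↦ g n) r := by
  ext r
  rw [Finset.sum_eq_single (nt r)]
  · exact (Set.indicator_of_mem (hnt r) fun _ ↦ g (nt r)).symm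
  · intro n _ hn
    exact Set.indicator_of_notMem (fun hr ↦ hn (index_eq_of_mem_Ioc ht hnt hr).symm) _
  · intro hr
    rw [Set.indicator_of_mem (hnt r)]
    simpa using hr

theorem integrable_indicator_Ioc_const (n : ℤ) (c : ℝ) :
    Integrable ((Set.Ioc (t n) (t (n + 1))).indicator fun _ ↦ c) :=
  (integrable_indicator_iff measurableSet_Ioc).mpr (integrableOn_const (by simp))

theorem integrable_comp_index (ht : Monotone t)
    (hnt : ∀ r, r ∈ Set.Ioc (t (nt r)) (t (nt r + 1))) {g : ℤ → ℝ}
    (hg : (Function.support g).Finite) : Integrable fun r ↦ g (nt r) := by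
  rw [comp_index_eq_sum_indicator ht hnt hg]
  exact integrable_finsetSum _ fun n _ ↦ integrable_indicator_Ioc_const n (g n)

theorem integral_comp_index (ht : Monotone t)
    (hnt : ∀ r, r ∈ Set.Ioc (t (nt r)) (t (nt r + 1))) {g : ℤ → ℝ}
    (hg : (Function.support g).Finite) :
    ∫ r, g (nt r) = ∑' n, (t (n + 1) - t n) * g n := by
  rw [comp_index_eq_sum_indicator ht hnt hg,
    integral_finsetSum _ fun n _ ↦ integrable_indicator_Ioc_const n (g n),
    tsum_eq_sum (s := hg.toFinset) fun n hn ↦ by simp_all]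
  refine Finset.sum_congr rfl fun n _ ↦ ?_
  rw [integral_indicator_const _ measurableSet_Ioc, measureReal_def, Real.volume_Ioc, smul_eq_mul,
    ENNReal.toReal_ofReal (sub_nonneg.mpr (ht (by omega)))]

end Partition

theorem stmt15_general (t : ℤ → ℝ) (ht : StrictMono t)
    (δt : ℝ) (hstep : ∀ n : ℤ, t (n + 1) - t n ≤ δt)
    (nt : ℝ → ℤ) (hnt : ∀ r : ℝ, r ∈ Set.Ioc (t (nt r)) (t (nt r + 1)))
    (a : ℤ → ℝ) (ha : ∀ n, 0 ≤ a n) (hfin : (Function.support a).Finite)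
    (τ : ℝ) (hτ : 0 < τ) (s : ℝ) :
    ∫ r : ℝ, (∑ n ∈ Finset.Icc (nt r + 1) (nt (r + τ)), (t (n + 1) - t n)) * a (nt (r + s) + 1)
      ≤ (τ + δt) * ∑' n : ℤ, (t (n + 1) - t n) * a (n + 1) := by
  have hmono := ht.monotone
  have hfin_shift : (Function.support fun n ↦ a (n + 1)).Finite :=
    hfin.preimage (add_left_injective 1).injOn
  have hsum_le (r : ℝ) :
      ∑ n ∈ Finset.Icc (nt r + 1) (nt (r + τ)), (t (n + 1) - t n) ≤ τ + δt := by
    simpa using sum_Icc_index_sub_le hmono hnt hstep (le_add_of_nonneg_right hτ.le) (r := r)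
  calc _ ≤ ∫ r, (τ + δt) * a (nt (r + s) + 1) := by
        refine integral_mono_of_nonneg (.of_forall fun r ↦ ?_)
          (((integrable_comp_index hmono hnt hfin_shift).comp_add_right s).const_mul _)
          (.of_forall fun r ↦ mul_le_mul_of_nonneg_right (hsum_le r) (ha _))
        exact mul_nonneg (Finset.sum_nonneg fun n _ ↦ sub_nonneg.mpr (hmono (by omega))) (ha _)
    _ = (τ + δt) * ∫ r, a (nt r + 1) := by
        rw [integral_const_mul, integral_add_right_eq_self (fun r ↦ a (nt r + 1)) s]
    _ = _ := by rw [integral_comp_index hmono hnt hfin_shift]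

/-- For a strictly increasing doubly-infinite partition `(t n)_{n ∈ ℤ}` of `ℝ` with steps
bounded by `δt`, `n(r)` the index with `r ∈ (t (n r), t (n r + 1)]`, and `(a n)` nonnegative
with finite support, for every `τ > 0` and `s ∈ ℝ`:
`∫_ℝ (∑_{n = n(r)+1}^{n(r+τ)} (t(n+1) - t(n))) · a(n(r+s)+1) dr
  ≤ (τ + δt) ∑_{n ∈ ℤ} (t(n+1) - t(n)) a(n+1)`. -/
theorem stmt15 (t : ℤ → ℝ) (ht : StrictMono t)
    (δt : ℝ) (hδt : 0 < δt) (hstep : ∀ n : ℤ, t (n + 1) - t n ≤ δt)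
    (hbot : Tendsto t atBot atBot) (htop : Tendsto t atTop atTop)
    (nt : ℝ → ℤ) (hnt : ∀ r : ℝ, r ∈ Set.Ioc (t (nt r)) (t (nt r + 1)))
    (a : ℤ → ℝ) (ha : ∀ n, 0 ≤ a n) (hfin : (Function.support a).Finite)
    (τ : ℝ) (hτ : 0 < τ) (s : ℝ) :
    ∫ r : ℝ, (∑ n ∈ Finset.Icc (nt r + 1) (nt (r + τ)), (t (n + 1) - t n)) * a (nt (r + s) + 1)
      ≤ (τ + δt) * ∑' n : ℤ, (t (n + 1) - t n) * a (n + 1) :=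
  stmt15_general t ht δt hstep nt hnt a ha hfin τ hτ s
end

section
/- Let V be a non-empty measurable subset of ℝ^N (N ≥ 1, Lebesgue measure) and β, ζ : ℝ → ℝ continuous nondecreasing functions with β(0) = ζ(0) = 0. Suppose there are measurable functions w_m : V → ℝ (m ∈ ℕ) and functions β̄, ζ̄ ∈ L²(V) such that: β(w_m) → β̄ and ζ(w_m) → ζ̄ weakly in L²(V) (i.e. the integrals against every L²(V) test function converge); and there exists φ ∈ L^∞(V) with φ > 0 a.e. on V such that ∫_V φ(z) β(w_m(z)) ζ(w_m(z)) dz → ∫_V φ(z) β̄(z) ζ̄(z) dz as m → ∞. Then for any measurable function w : V → ℝ satisfying β(w) + ζ(w) = β̄ + ζ̄ a.e. on V, one has β̄ = β(w) and ζ̄ = ζ(w) a.e. on V. -/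
open MeasureTheory Filter Topology

/-! Minty's trick. Monotonicity makes `φ (β(wₘ) - β(w)) (ζ(wₘ) - ζ(w))` pointwise nonnegative.
Expanding its integral, every term converges: the quadratic one by hypothesis, the cross terms by
weak convergence tested against `φ β(w)` and `φ ζ(w)`. Hence `∫ φ (β̄ - β(w)) (ζ̄ - ζ(w)) ≥ 0`.
Since `β̄ + ζ̄ = β(w) + ζ(w)`, this integrand equals `-φ (β̄ - β(w))²`, which forces
`β̄ = β(w)` wherever `φ > 0`. -/

section Monotone

variable {γ : Type*} [LinearOrder γ] {β ζ : γ → ℝ}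

lemma sub_mul_sub_nonneg_of_monotone (hβ : Monotone β) (hζ : Monotone ζ) (a b : γ) :
    0 ≤ (β a - β b) * (ζ a - ζ b) := by
  rcases le_total a b with h | h
  · exact mul_nonneg_of_nonpos_of_nonpos (sub_nonpos.2 (hβ h)) (sub_nonpos.2 (hζ h))
  · exact mul_nonneg (sub_nonneg.2 (hβ h)) (sub_nonneg.2 (hζ h))

lemma abs_le_abs_add_of_monotone [Zero γ] (hβ : Monotone β) (hζ : Monotone ζ)
    (hβ0 : β 0 = 0) (hζ0 : ζ 0 = 0) (x : γ) : |β x| ≤ |β x + ζ x| := by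
  rcases le_total 0 x with hx | hx
  · have hβx : 0 ≤ β x := hβ0 ▸ hβ hx
    have hζx : 0 ≤ ζ x := hζ0 ▸ hζ hx
    rw [abs_of_nonneg hβx, abs_of_nonneg (add_nonneg hβx hζx)]
    linarith
  · have hβx : β x ≤ 0 := hβ0 ▸ hβ hx
    have hζx : ζ x ≤ 0 := hζ0 ▸ hζ hx
    rw [abs_of_nonpos hβx, abs_of_nonpos (add_nonpos hβx hζx)]
    linarith

end Monotone

variable {α : Type*} [MeasurableSpace α] {μ : Measure α}

lemma memLp_comp_of_memLp_add_comp {p : ENNReal} {β ζ : ℝ → ℝ} {w : α → ℝ}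
    (hβ : Monotone β) (hζ : Monotone ζ) (hβ0 : β 0 = 0) (hζ0 : ζ 0 = 0) (hw : AEMeasurable w μ)
    (h : MemLp (fun z => β (w z) + ζ (w z)) p μ) : MemLp (fun z => β (w z)) p μ :=
  h.of_le (hβ.measurable.comp_aemeasurable hw).aestronglyMeasurable <| .of_forall fun z => by
    simpa only [Real.norm_eq_abs] using abs_le_abs_add_of_monotone hβ hζ hβ0 hζ0 (w z)

section Weighted

variable {φ f g b c : α → ℝ}

lemma integrable_mul_mul_of_memLp_top (hφ : MemLp φ ⊤ μ) (hf : MemLp f 2 μ) (hg : MemLp g 2 μ) :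
    Integrable (fun z => φ z * (f z * g z)) μ := by
  simpa only [Pi.mul_def, mul_assoc] using (hf.mul' hφ (r := 2)).integrable_mul hg

lemma integral_mul_sub_mul_sub (hφ : MemLp φ ⊤ μ) (hf : MemLp f 2 μ) (hg : MemLp g 2 μ)
    (hb : MemLp b 2 μ) (hc : MemLp c 2 μ) :
    ∫ z, φ z * ((f z - b z) * (g z - c z)) ∂μ
      = ∫ z, φ z * (f z * g z) ∂μ - ∫ z, f z * (φ z * c z) ∂μ
        - ∫ z, g z * (φ z * b z) ∂μ + ∫ z, φ z * (b z * c z) ∂μ := by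
  have hfc : Integrable (fun z => f z * (φ z * c z)) μ := hf.integrable_mul (hc.mul' hφ (r := 2))
  have hgb : Integrable (fun z => g z * (φ z * b z)) μ := hg.integrable_mul (hb.mul' hφ (r := 2))
  have hfg := integrable_mul_mul_of_memLp_top hφ hf hg
  have hbc := integrable_mul_mul_of_memLp_top hφ hb hc
  calc ∫ z, φ z * ((f z - b z) * (g z - c z)) ∂μ
      = ∫ z, φ z * (f z * g z) - f z * (φ z * c z) - g z * (φ z * b z) + φ z * (b z * c z) ∂μ :=
        integral_congr_ae (.of_forall fun z => by ring)
    _ = _ := by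
      have h₂ : Integrable (fun z => φ z * (f z * g z) - f z * (φ z * c z)) μ := hfg.sub hfc
      have h₃ : Integrable
          (fun z => φ z * (f z * g z) - f z * (φ z * c z) - g z * (φ z * b z)) μ := h₂.sub hgb
      rw [integral_add h₃ hbc, integral_sub h₂ hgb, integral_sub hfg hfc]

lemma integral_mul_sub_mul_sub_nonneg_of_tendsto {ι : Type*} {l : Filter ι} [l.NeBot]
    {F G : α → ℝ} {fs gs : ι → α → ℝ} (hφ : MemLp φ ⊤ μ) (hφ0 : 0 ≤ᵐ[μ] φ)
    (hfs : ∀ i, MemLp (fs i) 2 μ) (hgs : ∀ i, MemLp (gs i) 2 μ) (hF : MemLp F 2 μ)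
    (hG : MemLp G 2 μ) (hb : MemLp b 2 μ) (hc : MemLp c 2 μ)
    (hfF : Tendsto (fun i => ∫ z, fs i z * (φ z * c z) ∂μ) l (𝓝 (∫ z, F z * (φ z * c z) ∂μ)))
    (hgG : Tendsto (fun i => ∫ z, gs i z * (φ z * b z) ∂μ) l (𝓝 (∫ z, G z * (φ z * b z) ∂μ)))
    (hfg : Tendsto (fun i => ∫ z, φ z * (fs i z * gs i z) ∂μ) l
      (𝓝 (∫ z, φ z * (F z * G z) ∂μ)))
    (hmono : ∀ i, 0 ≤ᵐ[μ] fun z => (fs i z - b z) * (gs i z - c z)) :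
    0 ≤ ∫ z, φ z * ((F z - b z) * (G z - c z)) ∂μ := by
  have hlim : Tendsto (fun i => ∫ z, φ z * ((fs i z - b z) * (gs i z - c z)) ∂μ) l
      (𝓝 (∫ z, φ z * ((F z - b z) * (G z - c z)) ∂μ)) := by
    rw [integral_mul_sub_mul_sub hφ hF hG hb hc]
    refine Tendsto.congr (fun i => (integral_mul_sub_mul_sub hφ (hfs i) (hgs i) hb hc).symm) ?_
    exact ((hfg.sub hfF).sub hgG).add tendsto_const_nhds
  refine ge_of_tendsto' hlim fun i => integral_nonneg_of_ae ?_
  filter_upwards [hφ0, hmono i] with z hφz hz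
  exact mul_nonneg hφz hz

lemma ae_eq_zero_of_integral_mul_sq_nonpos (hφ : ∀ᵐ z ∂μ, 0 < φ z)
    (hint : Integrable (fun z => φ z * f z ^ 2) μ) (hle : ∫ z, φ z * f z ^ 2 ∂μ ≤ 0) :
    f =ᵐ[μ] 0 := by
  have hnn : 0 ≤ᵐ[μ] fun z => φ z * f z ^ 2 := hφ.mono fun z hz => by positivity
  have hzero : (fun z => φ z * f z ^ 2) =ᵐ[μ] 0 :=
    (integral_eq_zero_iff_of_nonneg_ae hnn hint).1 (le_antisymm hle (integral_nonneg_of_ae hnn))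
  filter_upwards [hzero, hφ] with z hz hφz
  simpa [hφz.ne'] using hz

lemma ae_eq_of_integral_mul_sub_mul_sub_nonneg {F G : α → ℝ} (hφ : MemLp φ ⊤ μ)
    (hφpos : ∀ᵐ z ∂μ, 0 < φ z) (hF : MemLp F 2 μ) (hb : MemLp b 2 μ)
    (hsum : (fun z => b z + c z) =ᵐ[μ] fun z => F z + G z)
    (h : 0 ≤ ∫ z, φ z * ((F z - b z) * (G z - c z)) ∂μ) : b =ᵐ[μ] F := by
  have hsq : (fun z => φ z * ((F z - b z) * (G z - c z)))
      =ᵐ[μ] fun z => -(φ z * (F z - b z) ^ 2) := by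
    filter_upwards [hsum] with z hz
    linear_combination (-(φ z * (F z - b z))) * hz
  have hdiff : MemLp (fun z => F z - b z) 2 μ := hF.sub hb
  have hle : ∫ z, φ z * (F z - b z) ^ 2 ∂μ ≤ 0 := by
    rw [integral_congr_ae hsq, integral_neg] at h
    linarith
  have hint : Integrable (fun z => φ z * (F z - b z) ^ 2) μ := by
    simpa only [sq] using integrable_mul_mul_of_memLp_top hφ hdiff hdiff
  filter_upwards [ae_eq_zero_of_integral_mul_sq_nonpos hφpos hint hle] with z hz
  simpa only [Pi.zero_apply, sub_eq_zero, eq_comm] using hz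

end Weighted

theorem stmt16_general (N : ℕ)
    (V : Set (EuclideanSpace ℝ (Fin N)))
    (β ζ : ℝ → ℝ)
    (hβm : Monotone β) (hζm : Monotone ζ) (hβ0 : β 0 = 0) (hζ0 : ζ 0 = 0)
    (wm : ℕ → EuclideanSpace ℝ (Fin N) → ℝ)
    (βbar ζbar : EuclideanSpace ℝ (Fin N) → ℝ)
    (hβbar : MemLp βbar 2 (volume.restrict V)) (hζbar : MemLp ζbar 2 (volume.restrict V))
    (hβwm : ∀ m, MemLp (fun z => β (wm m z)) 2 (volume.restrict V))
    (hζwm : ∀ m, MemLp (fun z => ζ (wm m z)) 2 (volume.restrict V))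
    (hβweak : ∀ g : EuclideanSpace ℝ (Fin N) → ℝ, MemLp g 2 (volume.restrict V) →
      Tendsto (fun m => ∫ z, β (wm m z) * g z ∂(volume.restrict V)) atTop
        (𝓝 (∫ z, βbar z * g z ∂(volume.restrict V))))
    (hζweak : ∀ g : EuclideanSpace ℝ (Fin N) → ℝ, MemLp g 2 (volume.restrict V) →
      Tendsto (fun m => ∫ z, ζ (wm m z) * g z ∂(volume.restrict V)) atTop
        (𝓝 (∫ z, ζbar z * g z ∂(volume.restrict V))))
    (φ : EuclideanSpace ℝ (Fin N) → ℝ) (hφmem : MemLp φ ⊤ (volume.restrict V))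
    (hφpos : ∀ᵐ z ∂(volume.restrict V), 0 < φ z)
    (hprod : Tendsto (fun m => ∫ z, φ z * (β (wm m z) * ζ (wm m z)) ∂(volume.restrict V))
      atTop (𝓝 (∫ z, φ z * (βbar z * ζbar z) ∂(volume.restrict V))))
    (w : EuclideanSpace ℝ (Fin N) → ℝ) (hwmeas : Measurable w)
    (hsum : (fun z => β (w z) + ζ (w z)) =ᵐ[volume.restrict V] fun z => βbar z + ζbar z) :
    ((fun z => β (w z)) =ᵐ[volume.restrict V] βbar) ∧
      ((fun z => ζ (w z)) =ᵐ[volume.restrict V] ζbar) := by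
  have hsumLp : MemLp (fun z => β (w z) + ζ (w z)) 2 (volume.restrict V) :=
    (hβbar.add hζbar).ae_eq hsum.symm
  have hβw := memLp_comp_of_memLp_add_comp hβm hζm hβ0 hζ0 hwmeas.aemeasurable hsumLp
  have hζw := memLp_comp_of_memLp_add_comp hζm hβm hζ0 hβ0 hwmeas.aemeasurable
    (by simpa only [add_comm] using hsumLp)
  have hminty : 0 ≤ ∫ z, φ z * ((βbar z - β (w z)) * (ζbar z - ζ (w z))) ∂(volume.restrict V) :=
    integral_mul_sub_mul_sub_nonneg_of_tendsto hφmem (hφpos.mono fun _ h => h.le) hβwm hζwm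
      hβbar hζbar hβw hζw (hβweak _ (hζw.mul' hφmem)) (hζweak _ (hβw.mul' hφmem)) hprod
      fun m => .of_forall fun z => sub_mul_sub_nonneg_of_monotone hβm hζm (wm m z) (w z)
  have hβeq := ae_eq_of_integral_mul_sub_mul_sub_nonneg hφmem hφpos hβbar hβw hsum hminty
  refine ⟨hβeq, ?_⟩
  filter_upwards [hsum, hβeq] with z hz hβz
  linarith

/-- Minty-like identification lemma: let `β, ζ` be continuous nondecreasing with
`β 0 = ζ 0 = 0`, `β(wₘ) ⇀ β̄` and `ζ(wₘ) ⇀ ζ̄` weakly in `L²(V)`, and suppose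
`∫ φ β(wₘ) ζ(wₘ) → ∫ φ β̄ ζ̄` for some `φ ∈ L^∞(V)` with `φ > 0` a.e. Then for any
measurable `w` with `β(w) + ζ(w) = β̄ + ζ̄` a.e., one has `β̄ = β(w)` and `ζ̄ = ζ(w)` a.e. -/
theorem stmt16 (N : ℕ) (hN : 1 ≤ N)
    (V : Set (EuclideanSpace ℝ (Fin N))) (hVmeas : MeasurableSet V) (hVne : V.Nonempty)
    (β ζ : ℝ → ℝ) (hβc : Continuous β) (hζc : Continuous ζ)
    (hβm : Monotone β) (hζm : Monotone ζ) (hβ0 : β 0 = 0) (hζ0 : ζ 0 = 0)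
    (wm : ℕ → EuclideanSpace ℝ (Fin N) → ℝ) (hwm : ∀ m, Measurable (wm m))
    (βbar ζbar : EuclideanSpace ℝ (Fin N) → ℝ)
    (hβbar : MemLp βbar 2 (volume.restrict V)) (hζbar : MemLp ζbar 2 (volume.restrict V))
    (hβwm : ∀ m, MemLp (fun z => β (wm m z)) 2 (volume.restrict V))
    (hζwm : ∀ m, MemLp (fun z => ζ (wm m z)) 2 (volume.restrict V))
    (hβweak : ∀ g : EuclideanSpace ℝ (Fin N) → ℝ, MemLp g 2 (volume.restrict V) →
      Tendsto (fun m => ∫ z, β (wm m z) * g z ∂(volume.restrict V)) atTop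
        (𝓝 (∫ z, βbar z * g z ∂(volume.restrict V))))
    (hζweak : ∀ g : EuclideanSpace ℝ (Fin N) → ℝ, MemLp g 2 (volume.restrict V) →
      Tendsto (fun m => ∫ z, ζ (wm m z) * g z ∂(volume.restrict V)) atTop
        (𝓝 (∫ z, ζbar z * g z ∂(volume.restrict V))))
    (φ : EuclideanSpace ℝ (Fin N) → ℝ) (hφmem : MemLp φ ⊤ (volume.restrict V))
    (hφpos : ∀ᵐ z ∂(volume.restrict V), 0 < φ z)
    (hprod : Tendsto (fun m => ∫ z, φ z * (β (wm m z) * ζ (wm m z)) ∂(volume.restrict V))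
      atTop (𝓝 (∫ z, φ z * (βbar z * ζbar z) ∂(volume.restrict V))))
    (w : EuclideanSpace ℝ (Fin N) → ℝ) (hwmeas : Measurable w)
    (hsum : (fun z => β (w z) + ζ (w z)) =ᵐ[volume.restrict V] fun z => βbar z + ζbar z) :
    ((fun z => β (w z)) =ᵐ[volume.restrict V] βbar) ∧
      ((fun z => ζ (w z)) =ᵐ[volume.restrict V] ζbar) :=
  stmt16_general N V β ζ hβm hζm hβ0 hζ0 wm βbar ζbar hβbar hζbar hβwm hζwm hβweak hζweak φ hφmem
    hφpos hprod w hwmeas hsum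
end

section
/- Let β, ζ : ℝ → ℝ be nondecreasing Lipschitz continuous functions with β(0) = ζ(0) = 0, and suppose there exist M₀, M₁ > 0 with |ζ(s)| ≥ M₀|s| − M₁ for all s ∈ ℝ. Then the graph G = {(ζ(s), β(s)) : s ∈ ℝ} is maximal monotone; that is, for any (x, y) ∈ ℝ² satisfying (ζ(s) − x)(β(s) − y) ≥ 0 for all s ∈ ℝ, there exists w ∈ ℝ with x = ζ(w) and y = β(w). -/
/-!
The growth bound makes `ζ` tend to `±∞`, so `ζ` is a proper surjection and its fibre over `x` is a
nonempty compact interval `[a, b]`. Right of `b` we have `ζ > x`, hence `β ≥ y`, and left of `a`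
we have `ζ < x`, hence `β ≤ y`; by continuity `β a ≤ y ≤ β b`, and the intermediate value theorem
on `[a, b]` produces `w` with `β w = y`, while `ζ w = x` because `ζ` is constant on `[a, b]`.
-/

open Filter Set

section Coercive

variable {f : ℝ → ℝ} {M₀ M₁ : ℝ}

theorem Monotone.tendsto_atTop_atTop_of_abs_growth (hf : Monotone f) (h0 : f 0 = 0)
    (hM₀ : 0 < M₀) (hgrow : ∀ s, M₀ * |s| - M₁ ≤ |f s|) : Tendsto f atTop atTop := by
  refine tendsto_atTop_mono' atTop ?_
    (tendsto_atTop_add_const_right _ (-M₁) (tendsto_id.const_mul_atTop hM₀))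
  filter_upwards [eventually_ge_atTop 0] with s hs
  have hfs : 0 ≤ f s := h0 ▸ hf hs
  have := hgrow s
  rw [abs_of_nonneg hs, abs_of_nonneg hfs] at this
  simp only [id]
  linarith

theorem Monotone.tendsto_atBot_atBot_of_abs_growth (hf : Monotone f) (h0 : f 0 = 0)
    (hM₀ : 0 < M₀) (hgrow : ∀ s, M₀ * |s| - M₁ ≤ |f s|) : Tendsto f atBot atBot := by
  refine tendsto_atBot_mono' atBot ?_
    (tendsto_atBot_add_const_right _ M₁ (tendsto_id.const_mul_atBot hM₀))
  filter_upwards [eventually_le_atBot 0] with s hs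
  have hfs : f s ≤ 0 := h0 ▸ hf hs
  have := hgrow s
  rw [abs_of_nonpos hs, abs_of_nonpos hfs] at this
  simp only [id]
  linarith

theorem Continuous.isProperMap_of_tendsto_atTop_atBot (hf : Continuous f)
    (htop : Tendsto f atTop atTop) (hbot : Tendsto f atBot atBot) : IsProperMap f :=
  isProperMap_iff_tendsto_cocompact.2 ⟨hf, Tendsto.mono_left
    ((hbot.mono_right atBot_le_cocompact).sup (htop.mono_right atTop_le_cocompact))
    cocompact_eq_atBot_atTop.le⟩

end Coercive

section Fibre

variable {β ζ : ℝ → ℝ} {x y : ℝ}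

theorem le_apply_of_mem_upperBounds_fibre (hβ : Continuous β) (hζ : Monotone ζ) {b : ℝ}
    (hb : ζ b = x) (hub : b ∈ upperBounds (ζ ⁻¹' {x}))
    (hxy : ∀ s, 0 ≤ (ζ s - x) * (β s - y)) : y ≤ β b := by
  refine ge_of_tendsto (hβ.continuousWithinAt (s := Ioi b) (x := b)).tendsto ?_
  filter_upwards [self_mem_nhdsWithin] with t (ht : b < t)
  have hζt : x < ζ t :=
    (hb ▸ hζ ht.le).lt_of_ne fun h => (hub (show ζ t = x from h.symm)).not_gt ht
  linarith [nonneg_of_mul_nonneg_right (hxy t) (sub_pos.2 hζt)]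

theorem apply_le_of_mem_lowerBounds_fibre (hβ : Continuous β) (hζ : Monotone ζ) {a : ℝ}
    (ha : ζ a = x) (hlb : a ∈ lowerBounds (ζ ⁻¹' {x}))
    (hxy : ∀ s, 0 ≤ (ζ s - x) * (β s - y)) : β a ≤ y := by
  refine le_of_tendsto (hβ.continuousWithinAt (s := Iio a) (x := a)).tendsto ?_
  filter_upwards [self_mem_nhdsWithin] with t (ht : t < a)
  have hζt : ζ t < x :=
    (ha ▸ hζ ht.le).lt_of_ne fun h => (hlb (show ζ t = x from h)).not_gt ht
  linarith [nonpos_of_mul_nonneg_right (hxy t) (sub_neg.2 hζt)]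

theorem exists_apply_eq_of_forall_mul_nonneg (hβ : Continuous β) (hζ : Monotone ζ)
    (hcpt : IsCompact (ζ ⁻¹' {x})) (hne : (ζ ⁻¹' {x}).Nonempty)
    (hxy : ∀ s, 0 ≤ (ζ s - x) * (β s - y)) : ∃ w, ζ w = x ∧ β w = y := by
  obtain ⟨a, ha, hlb⟩ := hcpt.exists_isLeast hne
  obtain ⟨b, hb, hub⟩ := hcpt.exists_isGreatest hne
  have hya := apply_le_of_mem_lowerBounds_fibre hβ hζ ha hlb hxy
  have hyb := le_apply_of_mem_upperBounds_fibre hβ hζ hb hub hxy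
  obtain ⟨w, ⟨haw, hwb⟩, hw⟩ := intermediate_value_Icc (hlb hb) hβ.continuousOn ⟨hya, hyb⟩
  exact ⟨w, le_antisymm (hb ▸ hζ hwb) (ha ▸ hζ haw), hw⟩

end Fibre

theorem stmt17_general (β ζ : ℝ → ℝ) (Lβ Lζ : ℝ)
    (hζmono : Monotone ζ)
    (hβlip : LipschitzWith Lβ.toNNReal β) (hζlip : LipschitzWith Lζ.toNNReal ζ)
    (hζ0 : ζ 0 = 0)
    (M₀ M₁ : ℝ) (hM₀ : 0 < M₀)
    (hgrow : ∀ s : ℝ, M₀ * |s| - M₁ ≤ |ζ s|)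
    (x y : ℝ) (hxy : ∀ s : ℝ, 0 ≤ (ζ s - x) * (β s - y)) :
    ∃ w : ℝ, x = ζ w ∧ y = β w := by
  have htop := hζmono.tendsto_atTop_atTop_of_abs_growth hζ0 hM₀ hgrow
  have hbot := hζmono.tendsto_atBot_atBot_of_abs_growth hζ0 hM₀ hgrow
  have hproper := hζlip.continuous.isProperMap_of_tendsto_atTop_atBot htop hbot
  obtain ⟨w, hζw, hβw⟩ := exists_apply_eq_of_forall_mul_nonneg hβlip.continuous hζmono
    (hproper.isCompact_preimage isCompact_singleton)
    ((hζlip.continuous.surjective htop hbot).nonempty_preimage.2 (singleton_nonempty x)) hxy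
  exact ⟨w, hζw.symm, hβw.symm⟩

/-- The graph `{(ζ s, β s) : s ∈ ℝ}` is maximal monotone: if `(x, y)` satisfies
`(ζ s - x) * (β s - y) ≥ 0` for all `s`, then `x = ζ w` and `y = β w` for some `w`. -/
theorem stmt17 (β ζ : ℝ → ℝ) (Lβ Lζ : ℝ) (hLβ : 0 < Lβ) (hLζ : 0 < Lζ)
    (hβmono : Monotone β) (hζmono : Monotone ζ)
    (hβlip : LipschitzWith Lβ.toNNReal β) (hζlip : LipschitzWith Lζ.toNNReal ζ)
    (hβ0 : β 0 = 0) (hζ0 : ζ 0 = 0)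
    (M₀ M₁ : ℝ) (hM₀ : 0 < M₀) (hM₁ : 0 < M₁)
    (hgrow : ∀ s : ℝ, M₀ * |s| - M₁ ≤ |ζ s|)
    (x y : ℝ) (hxy : ∀ s : ℝ, 0 ≤ (ζ s - x) * (β s - y)) :
    ∃ w : ℝ, x = ζ w ∧ y = β w :=
  stmt17_general β ζ Lβ Lζ hζmono hβlip hζlip hζ0 M₀ M₁ hM₀ hgrow x y hxy
end

section
/- Let G ⊆ ℝ × ℝ be a maximal monotone graph with (0, 0) ∈ G; that is, (x − x')(y − y') ≥ 0 for all (x, y), (x', y') ∈ G, and every (x, y) ∈ ℝ² satisfying (x − x')(y − y') ≥ 0 for all (x', y') ∈ G belongs to G. Then there exist nondecreasing functions ζ, β : ℝ → ℝ, each Lipschitz continuous with constant 2, such that ζ(0) = β(0) = 0, ζ(s) + β(s) = 2s for all s ∈ ℝ, and G = {(ζ(s), β(s)) : s ∈ ℝ}. -/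
/-- Any maximal monotone graph `G ⊆ ℝ × ℝ` containing `(0,0)` can be parametrized as
`G = {(ζ s, β s) : s ∈ ℝ}` with `ζ, β` nondecreasing, `2`-Lipschitz, vanishing at `0`,
and satisfying `ζ s + β s = 2 s` for all `s`. -/
theorem stmt18 (G : Set (ℝ × ℝ)) (hG0 : ((0:ℝ), (0:ℝ)) ∈ G)
    (hmono : ∀ p ∈ G, ∀ q ∈ G, 0 ≤ (p.1 - q.1) * (p.2 - q.2))
    (hmax : ∀ x y : ℝ, (∀ q ∈ G, 0 ≤ (x - q.1) * (y - q.2)) → (x, y) ∈ G) :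
    ∃ ζ β : ℝ → ℝ, Monotone ζ ∧ Monotone β ∧
      LipschitzWith 2 ζ ∧ LipschitzWith 2 β ∧
      ζ 0 = 0 ∧ β 0 = 0 ∧ (∀ s : ℝ, ζ s + β s = 2 * s) ∧
      G = {p : ℝ × ℝ | ∃ s : ℝ, p = (ζ s, β s)} := by
  -- existence of a point of G on each line x + y = 2s
  have hE : ∀ s : ℝ, ∃ x : ℝ, (x, 2 * s - x) ∈ G := by
    intro s
    set M : Set ℝ := {t | ∃ q ∈ G, t = min q.1 (2 * s - q.2)} with hM
    have hpair : ∀ q ∈ G, ∀ r ∈ G,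
        min q.1 (2 * s - q.2) ≤ max r.1 (2 * s - r.2) := by
      intro q hq r hr
      by_contra h
      push_neg at h
      have h1 : r.1 < q.1 := lt_of_le_of_lt (le_max_left _ _)
        (lt_of_lt_of_le h (min_le_left _ _))
      have h2 : 2 * s - r.2 < 2 * s - q.2 := lt_of_le_of_lt (le_max_right _ _)
        (lt_of_lt_of_le h (min_le_right _ _))
      have := hmono q hq r hr
      nlinarith
    have hne : M.Nonempty := ⟨min 0 (2 * s), ⟨(0, 0), hG0, by simp⟩⟩
    have hbdd : BddAbove M := by
      refine ⟨max 0 (2 * s), ?_⟩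
      rintro t ⟨q, hq, rfl⟩
      simpa using hpair q hq (0, 0) hG0
    set x := sSup M with hx
    refine ⟨x, hmax x (2 * s - x) ?_⟩
    intro q hq
    have hlb : min q.1 (2 * s - q.2) ≤ x := le_csSup hbdd ⟨q, hq, rfl⟩
    have hub : x ≤ max q.1 (2 * s - q.2) := by
      apply csSup_le hne
      rintro t ⟨r, hr, rfl⟩
      exact hpair r hr q hq
    rcases le_total q.1 (2 * s - q.2) with hc | hc
    · rw [min_eq_left hc] at hlb; rw [max_eq_right hc] at hub; nlinarith
    · rw [min_eq_right hc] at hlb; rw [max_eq_left hc] at hub; nlinarith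
  -- uniqueness of that point
  have huniq : ∀ p ∈ G, ∀ q ∈ G, p.1 + p.2 = q.1 + q.2 → p = q := by
    intro p hp q hq hsum
    have h := hmono p hp q hq
    have h1 : p.1 = q.1 := by nlinarith
    have h2 : p.2 = q.2 := by linarith
    exact Prod.ext h1 h2
  set ζ : ℝ → ℝ := fun s => Classical.choose (hE s) with hζ
  set β : ℝ → ℝ := fun s => 2 * s - ζ s with hβ
  have hmem : ∀ s : ℝ, (ζ s, β s) ∈ G := fun s => Classical.choose_spec (hE s)
  have hkey : ∀ s t : ℝ, s ≤ t → ζ s ≤ ζ t ∧ ζ t - ζ s ≤ 2 * (t - s) := by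
    intro s t hst
    have h := hmono (ζ t, β t) (hmem t) (ζ s, β s) (hmem s)
    simp only [hβ] at h ⊢
    constructor <;> nlinarith
  have hmζ : Monotone ζ := fun s t hst => (hkey s t hst).1
  have hmβ : Monotone β := by
    intro s t hst
    have := (hkey s t hst).2
    simp only [hβ]
    linarith
  have hlipζ : LipschitzWith 2 ζ := by
    apply LipschitzWith.of_dist_le_mul
    intro s t
    rw [Real.dist_eq, Real.dist_eq]
    push_cast
    rcases le_total s t with h | h
    · obtain ⟨h1, h2⟩ := hkey s t h
      rw [abs_of_nonpos (by linarith), abs_of_nonpos (by linarith)]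
      linarith
    · obtain ⟨h1, h2⟩ := hkey t s h
      rw [abs_of_nonneg (by linarith), abs_of_nonneg (by linarith)]
      linarith
  have hlipβ : LipschitzWith 2 β := by
    apply LipschitzWith.of_dist_le_mul
    intro s t
    rw [Real.dist_eq, Real.dist_eq]
    push_cast
    simp only [hβ]
    rcases le_total s t with h | h
    · obtain ⟨h1, h2⟩ := hkey s t h
      rw [abs_of_nonpos (by linarith), abs_of_nonpos (by linarith)]
      linarith
    · obtain ⟨h1, h2⟩ := hkey t s h
      rw [abs_of_nonneg (by linarith), abs_of_nonneg (by linarith)]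
      linarith
  have hζ0 : ζ 0 = 0 := by
    have := huniq (ζ 0, β 0) (hmem 0) (0, 0) hG0 (by simp [hβ])
    exact congrArg Prod.fst this
  refine ⟨ζ, β, hmζ, hmβ, hlipζ, hlipβ, hζ0, by simp [hβ, hζ0], fun s => by simp [hβ], ?_⟩
  ext p
  constructor
  · intro hp
    refine ⟨(p.1 + p.2) / 2, ?_⟩
    have hsum : p.1 + p.2 = ζ ((p.1 + p.2) / 2) + β ((p.1 + p.2) / 2) := by
      simp [hβ]; ring
    exact huniq p hp _ (hmem _) hsum
  · rintro ⟨s, rfl⟩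
    exact hmem s
end
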